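/- arXiv:2111.05625 — 2 statements merged into one kernel-verified Lean document; each statement's English description precedes it below -/
import Mathlib

section
/- Let Λ and Λ' be Bedford–McMullen carpets defined on the same m×n grid, both with non-uniform vertical fibres, with parameters (M₀, Ñ_1 > ⋯ > Ñ_{M₀}, R_1,…,R_{M₀}) and (M₀', Ñ'_1 > ⋯ > Ñ'_{M₀'}, R'_1,…,R'_{M₀'}) respectively, and rate functions I and I' respectively. Let t̲ and t̄ be the quantities associated to Λ. Then I(t) = I'(t − γ·log(M'/M)) for every t ∈ (t̲, t̄) if and only if M₀ = M₀' and, for every î ∈ {1,…,M₀}, Ñ_î/Ñ'_î = (R'_î/R_î)^γ = (M'/M)^γ. -/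
open Filter Set MeasureTheory
open scoped ENNReal NNReal Topology

noncomputable section

/-- The data defining a Bedford–McMullen carpet: an `m × n` grid with `n > m ≥ 2` and a
nonempty set `A` of selected rectangles, with more than one nonempty column. -/
structure BMData where
  m : ℕ
  n : ℕ
  two_le_m : 2 ≤ m
  m_lt_n : m < n
  A : Finset (Fin m × Fin n)
  A_nonempty : A.Nonempty
  one_lt_cols : 1 < (A.image Prod.fst).card

namespace BMData

variable (C : BMData)

/-- The affine contraction `f_{(i,j)}` associated to a selected rectangle `(i, j) ∈ A`
(with the grid indexed from `0` rather than from `1`). -/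
def map (p : Fin C.m × Fin C.n) (x : ℝ × ℝ) : ℝ × ℝ :=
  (x.1 / C.m + (p.1 : ℝ) / C.m, x.2 / C.n + (p.2 : ℝ) / C.n)

/-- `Λ` is the attractor of the iterated function system: the unique nonempty compact set
satisfying `Λ = ⋃_{p ∈ A} f_p(Λ)`. -/
def IsAttractor (Λ : Set (ℝ × ℝ)) : Prop :=
  Λ.Nonempty ∧ IsCompact Λ ∧ Λ = ⋃ p ∈ C.A, C.map p '' Λ

/-- The (finite set of) nonempty columns. -/
def cols : Finset (Fin C.m) := C.A.image Prod.fst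

/-- `M`, the number of nonempty columns. -/
def M : ℕ := C.cols.card

/-- `N`, the total number of maps. -/
def N : ℕ := C.A.card

/-- The number `N_î` of maps in column `î`. -/
def colCount (i : Fin C.m) : ℕ := (C.A.filter fun p => p.1 = i).card

/-- Non-uniform vertical fibres: the column counts are not all equal. -/
def NonUniform : Prop :=
  ∃ i ∈ C.cols, ∃ j ∈ C.cols, C.colCount i ≠ C.colCount j

/-- `γ = log n / log m`. -/
def gamma : ℝ := Real.log C.n / Real.log C.m

/-- `t̲ = (1/M) ∑_ĵ log N_ĵ`. -/
def tLow : ℝ := (1 / (C.M : ℝ)) * ∑ j ∈ C.cols, Real.log (C.colCount j)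

/-- `t̄ = ∑_ĵ (N_ĵ/N) log N_ĵ`. -/
def tUp : ℝ := ∑ j ∈ C.cols, ((C.colCount j : ℝ) / (C.N : ℝ)) * Real.log (C.colCount j)

/-- The large deviations rate function
`I(t) = sup_λ (λt − log((1/M) ∑_ĵ N_ĵ^λ))`. -/
def rate (t : ℝ) : ℝ :=
  ⨆ l : ℝ, (l * t - Real.log ((1 / (C.M : ℝ)) * ∑ j ∈ C.cols, (C.colCount j : ℝ) ^ l))

/-- The map `T_s(t) = (s − log M/log m)·log n + γ·I(t)`. -/
def T (s t : ℝ) : ℝ :=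
  (s - Real.log C.M / Real.log C.m) * Real.log C.n + C.gamma * C.rate t

/-- The sequence `t_ℓ(s)`, shifted so that `t_L(s) = tseq s (L - 1)`:
`tseq s 0 = t_1(s) = (s − log M/log m)·log n` and `tseq s (k+1) = T_s (tseq s k)`. -/
def tseq (s : ℝ) : ℕ → ℝ
  | 0 => (s - Real.log C.M / Real.log C.m) * Real.log C.n
  | k + 1 => C.T s (tseq s k)

/-- The Hausdorff dimension of the carpet (Bedford–McMullen formula). -/
def dimH : ℝ :=
  (1 / Real.log C.m) *
    Real.log (∑ j ∈ C.cols, (C.colCount j : ℝ) ^ (Real.log C.m / Real.log C.n))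

/-- The box dimension of the carpet (Bedford–McMullen formula). -/
def dimB : ℝ :=
  Real.log C.N / Real.log C.n + (1 - Real.log C.m / Real.log C.n) * (Real.log C.M / Real.log C.m)

/-- `(M₀, Ñ_1 > ⋯ > Ñ_{M₀}, R_1, …, R_{M₀})` are the parameters of the carpet: `Ñ` lists the
distinct values among the column counts in strictly decreasing order, and `R î` is the number
of nonempty columns whose count equals `Ñ î`. -/
def HasParams (M0 : ℕ) (Nt R : Fin M0 → ℕ) : Prop :=
  (∀ i j : Fin M0, i < j → Nt j < Nt i) ∧
  (∀ i : Fin M0, 0 < R i) ∧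
  (∀ c ∈ C.cols, ∃ i : Fin M0, C.colCount c = Nt i) ∧
  (∀ i : Fin M0, R i = (C.cols.filter fun c => C.colCount c = Nt i).card)

/-- `ψ_{ī|k}(s) = M^{kγ}·n^{−sk}·∏_{ℓ=1}^k N_{i_ℓ}` for a word `ī` of length `J` over the
alphabet of nonempty columns. -/
def psi (s : ℝ) {J : ℕ} (w : Fin J → {c // c ∈ C.cols}) (k : ℕ) : ℝ :=
  (C.M : ℝ) ^ ((k : ℝ) * C.gamma) * (C.n : ℝ) ^ (-(s * (k : ℝ))) *
    ∏ l ∈ Finset.univ.filter (fun l : Fin J => (l : ℕ) < k), (C.colCount (w l).1 : ℝ)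

/-- `Ψ_J(s) = ∑_{ī} min_{0 ≤ k ≤ J} ψ_{ī|k}(s)`. -/
def Psi (J : ℕ) (s : ℝ) : ℝ :=
  ∑ w : Fin J → {c // c ∈ C.cols}, ⨅ k : Fin (J + 1), C.psi s w (k : ℕ)

open Classical in
/-- `∑_{ī : ψ_{ī|J}(s) ≤ 1} ψ_{ī|J}(s)`. -/
def psiSumLe (s : ℝ) (J : ℕ) : ℝ :=
  ∑ w : Fin J → {c // c ∈ C.cols}, if C.psi s w J ≤ 1 then C.psi s w J else 0

/-- `H(Q*_t)`: the maximal entropy of a probability vector `q` on the nonempty columns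
subject to `∑_ĵ q_ĵ log N_ĵ = t`. -/
def entMax (t : ℝ) : ℝ :=
  sSup { h : ℝ | ∃ q : Fin C.m → ℝ, (∀ j, 0 ≤ q j) ∧ (∀ j ∉ C.cols, q j = 0) ∧
    (∑ j ∈ C.cols, q j) = 1 ∧ (∑ j ∈ C.cols, q j * Real.log (C.colCount j)) = t ∧
    h = -∑ j ∈ C.cols, q j * Real.log (q j) }

/-- A probability vector on the nonempty columns. -/
def IsProbVec (p : Fin C.m → ℝ) : Prop :=
  (∀ j, 0 ≤ p j) ∧ (∀ j ∉ C.cols, p j = 0) ∧ (∑ j ∈ C.cols, p j) = 1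

/-- `∑_ĵ p_ĵ log N_ĵ`. -/
def colAvg (p : Fin C.m → ℝ) : ℝ := ∑ j ∈ C.cols, p j * Real.log (C.colCount j)

/-- The relative entropy `H(p‖P)` where `P = (N_1/N, …, N_M/N)`. -/
def relEntP (p : Fin C.m → ℝ) : ℝ :=
  ∑ j ∈ C.cols, p j * Real.log (p j / ((C.colCount j : ℝ) / (C.N : ℝ)))

/-- The relative entropy `H(p‖Q)` where `Q = (1/M, …, 1/M)`. -/
def relEntQ (p : Fin C.m → ℝ) : ℝ :=
  ∑ j ∈ C.cols, p j * Real.log (p j / (1 / (C.M : ℝ)))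

/-- The function `β(ξ)` of the multifractal spectrum of the uniform self-affine measure. -/
def beta (ξ : ℝ) : ℝ :=
  (1 / Real.log C.m) * (-(ξ * Real.log C.N) +
    Real.log (∑ j ∈ C.cols, (C.colCount j : ℝ) ^ (C.gamma⁻¹ + (1 - C.gamma⁻¹) * ξ)))

/-- `f(α) = inf_ξ (αξ + β(ξ))`. -/
def fspec (α : ℝ) : ℝ := ⨅ ξ : ℝ, (α * ξ + C.beta ξ)

end BMData

/-- The lower `θ`-intermediate dimension of a set in a metric space. -/
def lowerInterDim {X : Type*} [MetricSpace X] (θ : ℝ) (F : Set X) : ℝ :=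
  sInf { s : ℝ | 0 ≤ s ∧ ∀ ε > 0, ∀ δ₀ > 0, ∃ δ : ℝ, 0 < δ ∧ δ ≤ δ₀ ∧
    ∃ 𝒰 : Set (Set X), 𝒰.Countable ∧ F ⊆ ⋃₀ 𝒰 ∧
      (∀ U ∈ 𝒰, δ ^ (1 / θ) ≤ Metric.diam U ∧ Metric.diam U ≤ δ) ∧
      (∑' U : 𝒰, ENNReal.ofReal (Metric.diam (U : Set X) ^ s)) ≤ ENNReal.ofReal ε }

/-- The upper `θ`-intermediate dimension of a set in a metric space. -/
def upperInterDim {X : Type*} [MetricSpace X] (θ : ℝ) (F : Set X) : ℝ :=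
  sInf { s : ℝ | 0 ≤ s ∧ ∀ ε > 0, ∃ δ₀ > 0, ∀ δ : ℝ, 0 < δ → δ ≤ δ₀ →
    ∃ 𝒰 : Set (Set X), 𝒰.Countable ∧ F ⊆ ⋃₀ 𝒰 ∧
      (∀ U ∈ 𝒰, δ ^ (1 / θ) ≤ Metric.diam U ∧ Metric.diam U ≤ δ) ∧
      (∑' U : 𝒰, ENNReal.ofReal (Metric.diam (U : Set X) ^ s)) ≤ ENNReal.ofReal ε }

/-- The topological support of a Borel measure: the set of points all of whose
neighbourhoods have positive measure. -/
def measSupport {X : Type*} [MetricSpace X] [MeasurableSpace X] (μ : Measure X) : Set X :=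
  { x | ∀ r : ℝ, 0 < r → 0 < μ (Metric.ball x r) }

/-- `S^s_{δ,θ}(F)`: the infimal `s`-cost of a countable cover of `F` by sets of diameter
between `δ^{1/θ}` and `δ`. -/
def interCost {X : Type*} [MetricSpace X] (F : Set X) (θ s δ : ℝ) : ℝ≥0∞ :=
  sInf { c : ℝ≥0∞ | ∃ 𝒰 : Set (Set X), 𝒰.Countable ∧ F ⊆ ⋃₀ 𝒰 ∧
    (∀ U ∈ 𝒰, δ ^ (1 / θ) ≤ Metric.diam U ∧ Metric.diam U ≤ δ) ∧
    c = ∑' U : 𝒰, ENNReal.ofReal (Metric.diam (U : Set X) ^ s) }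

/-!
The rate function `I` is the Legendre transform of `Λ(λ) = log((1/M) ∑ N_ĵ^λ)`, the cumulant
generating function of `log N_ĵ` for a uniformly chosen nonempty column. `Λ` is strictly convex,
so for `t ∈ (t̲, t̄) = (Λ'(0), Λ'(1))` the supremum defining `I(t)` is attained at the unique
`λ ∈ (0, 1)` with `Λ'(λ) = t`, and `λ` is the slope of the supporting line of `I` at `t`.
If `I(t) = I'(t - c)` on this interval, then `I'` is finite near `t - c`, so it has a supporting
line there too, and comparing the two supporting lines of the same function gives
`Λ(λ) = Λ'(λ) + λc` for `λ ∈ (0, 1)`. Grouping columns by their counts turns this into the identity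
`∑ (R_î/M) Ñ_î^λ = ∑ (R'_î/M') (e^c Ñ'_î)^λ` of exponential sums on an interval, and linear
independence of exponentials matches exponents and coefficients, which is the parameter condition
for `c = γ log(M'/M)`. Conversely, the parameter condition gives `Λ' = Λ - λc` on all of `ℝ`.
-/

section ExpSums

variable {ι : Type*}

theorem hasDerivAt_sum_mul_exp (s : Finset ι) (w ℓ : ι → ℝ) (x : ℝ) :
    HasDerivAt (fun b => ∑ j ∈ s, w j * Real.exp (b * ℓ j))
      (∑ j ∈ s, w j * ℓ j * Real.exp (x * ℓ j)) x := by
  refine HasDerivAt.fun_sum fun j _ => ?_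
  have := ((hasDerivAt_mul_const (x := x) (ℓ j)).exp).const_mul (w j)
  exact this.congr_deriv (by ring)

theorem linearIndependent_exp_mul {U : Set ℝ} (hU : IsOpen U) (hne : U.Nonempty) :
    LinearIndependent ℝ (fun r : ℝ => fun x : U => Real.exp (x * r)) := by
  rw [linearIndependent_iff']
  intro T g hg
  have hmoments : ∀ k : ℕ, ∀ x ∈ U, ∑ r ∈ T, g r * r ^ k * Real.exp (x * r) = 0 := by
    intro k
    induction k with
    | zero => intro x hx; simpa using congrFun hg ⟨x, hx⟩
    | succ k ih =>
      intro x hx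
      have hzero : (fun b => ∑ r ∈ T, g r * r ^ k * Real.exp (b * r)) =ᶠ[𝓝 x] fun _ => 0 :=
        Filter.eventually_of_mem (hU.mem_nhds hx) ih
      have := (hasDerivAt_sum_mul_exp T (fun r => g r * r ^ k) id x).unique
        ((hasDerivAt_const x (0 : ℝ)).congr_of_eventuallyEq hzero)
      simpa [pow_succ, mul_assoc] using this
  obtain ⟨x₀, hx₀⟩ := hne
  -- The moments `∑ r, (g r e^{x₀ r}) r^k` all vanish, so a Vandermonde determinant kills them.
  set e := T.equivFin.symm
  have hv := Matrix.eq_zero_of_forall_pow_sum_mul_pow_eq_zero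
    (f := fun j => (e j : ℝ)) (v := fun j => g (e j) * Real.exp (x₀ * e j))
    (Subtype.val_injective.comp e.injective) fun k => by
      rw [e.sum_comp (fun r => g r * Real.exp (x₀ * r) * (r : ℝ) ^ (k : ℕ)),
        Finset.sum_coe_sort T (fun r => g r * Real.exp (x₀ * r) * r ^ (k : ℕ))]
      simpa [mul_right_comm] using hmoments k x₀ hx₀
  intro r hr
  have := congrFun hv (e.symm ⟨r, hr⟩)
  simpa using this

end ExpSums

theorem StrictAnti.exists_cast_eq_of_range_eq {α : Type*} [Preorder α] {a b : ℕ}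
    {f : Fin a → α} {g : Fin b → α} (hf : StrictAnti f) (hg : StrictAnti g)
    (h : range f = range g) : ∃ hab : a = b, ∀ i, f i = g (Fin.cast hab i) := by
  obtain rfl : a = b := by
    simpa using (Nat.card_range_of_injective hf.injective).symm.trans
      ((congrArg (fun S : Set α => Nat.card S) h).trans (Nat.card_range_of_injective hg.injective))
  exact ⟨rfl, fun i => by rw [(hf.range_inj hg).1 h, Fin.cast_eq_self]⟩

theorem exists_cast_eq_of_sum_mul_exp_eq {a b : ℕ} {f : Fin a → ℝ} {g : Fin b → ℝ}
    {A : Fin a → ℝ} {B : Fin b → ℝ} (hf : StrictAnti f) (hg : StrictAnti g)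
    (hA : ∀ i, A i ≠ 0) (hB : ∀ j, B j ≠ 0)
    (h : ∀ x ∈ Ioo (0 : ℝ) 1, ∑ i, A i * Real.exp (x * f i) = ∑ j, B j * Real.exp (x * g j)) :
    ∃ hab : a = b, ∀ i, f i = g (Fin.cast hab i) ∧ A i = B (Fin.cast hab i) := by
  set wA : ℝ →₀ ℝ := Finsupp.mapDomain f (Finsupp.equivFunOnFinite.symm A)
  set wB : ℝ →₀ ℝ := Finsupp.mapDomain g (Finsupp.equivFunOnFinite.symm B)
  have hw : wA = wB := by
    apply linearIndependent_exp_mul isOpen_Ioo (nonempty_Ioo.2 zero_lt_one)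
    simp only [wA, wB, Finsupp.linearCombination_mapDomain]
    rw [Finsupp.linearCombination_apply, Finsupp.linearCombination_apply,
      Finsupp.sum_fintype _ _ (by simp), Finsupp.sum_fintype _ _ (by simp)]
    ext x
    simpa [Finset.sum_apply] using h x x.2
  have hwA (i) : wA (f i) = A i := by simp [wA, Finsupp.mapDomain_apply hf.injective]
  have hwB (j) : wB (g j) = B j := by simp [wB, Finsupp.mapDomain_apply hg.injective]
  have hfg : range f ⊆ range g := by
    rintro _ ⟨i, rfl⟩
    by_contra hi
    exact hA i (by rw [← hwA, hw, Finsupp.mapDomain_of_notMem_range _ _ hi])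
  have hgf : range g ⊆ range f := by
    rintro _ ⟨j, rfl⟩
    by_contra hj
    exact hB j (by rw [← hwB, ← hw, Finsupp.mapDomain_of_notMem_range _ _ hj])
  obtain ⟨hab, hcast⟩ := hf.exists_cast_eq_of_range_eq hg (hfg.antisymm hgf)
  exact ⟨hab, fun i => ⟨hcast i, by rw [← hwA, ← hwB, hcast, hw]⟩⟩

section LogMeanExp

variable {ι : Type*} (s : Finset ι) (ℓ : ι → ℝ)

def expSum (b : ℝ) : ℝ := ∑ j ∈ s, Real.exp (b * ℓ j)

def tiltedMean (b : ℝ) : ℝ := (∑ j ∈ s, ℓ j * Real.exp (b * ℓ j)) / expSum s ℓ b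

def logMeanExp (b : ℝ) : ℝ := Real.log (1 / (s.card : ℝ) * expSum s ℓ b)

def rateFun (t : ℝ) : ℝ := ⨆ b : ℝ, (b * t - logMeanExp s ℓ b)

variable {s ℓ}

theorem expSum_pos (hs : s.Nonempty) (b : ℝ) : 0 < expSum s ℓ b :=
  Finset.sum_pos (fun _ _ => Real.exp_pos _) hs

theorem mean_expSum_pos (hs : s.Nonempty) (b : ℝ) : 0 < 1 / (s.card : ℝ) * expSum s ℓ b := by
  have := expSum_pos (ℓ := ℓ) hs b
  have : (0 : ℝ) < s.card := by exact_mod_cast hs.card_pos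
  positivity

theorem hasDerivAt_expSum (b : ℝ) :
    HasDerivAt (expSum s ℓ) (∑ j ∈ s, ℓ j * Real.exp (b * ℓ j)) b := by
  have := hasDerivAt_sum_mul_exp s 1 ℓ b
  simp only [Pi.one_apply, one_mul] at this
  exact this

theorem hasDerivAt_logMeanExp (hs : s.Nonempty) (b : ℝ) :
    HasDerivAt (logMeanExp s ℓ) (tiltedMean s ℓ b) b := by
  have hcard : (0 : ℝ) < s.card := by exact_mod_cast hs.card_pos
  refine (((hasDerivAt_expSum b).const_mul _).log (mean_expSum_pos hs b).ne').congr_deriv ?_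
  rw [tiltedMean, mul_div_mul_left _ _ (by positivity)]

theorem sum_sum_sq_sub_mul (e : ι → ℝ) :
    ∑ i ∈ s, ∑ j ∈ s, (ℓ i - ℓ j) ^ 2 * (e i * e j) =
      2 * ((∑ i ∈ s, ℓ i ^ 2 * e i) * (∑ i ∈ s, e i) - (∑ i ∈ s, ℓ i * e i) ^ 2) := by
  have h (i j : ι) : (ℓ i - ℓ j) ^ 2 * (e i * e j) =
      ℓ i ^ 2 * e i * e j + e i * (ℓ j ^ 2 * e j) - 2 * (ℓ i * e i * (ℓ j * e j)) := by ring
  simp only [h, Finset.sum_sub_distrib, Finset.sum_add_distrib, ← Finset.mul_sum,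
    ← Finset.sum_mul]
  ring

-- The numerator is twice the variance of `ℓ` under the weights `exp (b * ℓ j)`, written as a
-- double sum so that its sign can be read off.
theorem hasDerivAt_tiltedMean (hs : s.Nonempty) (b : ℝ) :
    HasDerivAt (tiltedMean s ℓ)
      ((∑ i ∈ s, ∑ j ∈ s, (ℓ i - ℓ j) ^ 2 * (Real.exp (b * ℓ i) * Real.exp (b * ℓ j))) /
        (2 * expSum s ℓ b ^ 2)) b := by
  have hS := expSum_pos (ℓ := ℓ) hs b
  refine ((hasDerivAt_sum_mul_exp s ℓ ℓ b).div (hasDerivAt_expSum b) hS.ne').congr_deriv ?_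
  rw [sum_sum_sq_sub_mul, mul_div_mul_left _ _ two_ne_zero, sq (∑ i ∈ s, ℓ i * _), expSum]
  simp only [← sq]

theorem monotone_tiltedMean (hs : s.Nonempty) : Monotone (tiltedMean s ℓ) :=
  monotone_of_deriv_nonneg (fun b => (hasDerivAt_tiltedMean hs b).differentiableAt) fun b => by
    rw [(hasDerivAt_tiltedMean hs b).deriv]
    positivity

theorem strictMono_tiltedMean (hne : ∃ i ∈ s, ∃ j ∈ s, ℓ i ≠ ℓ j) :
    StrictMono (tiltedMean s ℓ) := by
  obtain ⟨i, hi, j, hj, hij⟩ := hne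
  refine strictMono_of_deriv_pos fun b => ?_
  rw [(hasDerivAt_tiltedMean ⟨i, hi⟩ b).deriv]
  have : ℓ i - ℓ j ≠ 0 := sub_ne_zero.2 hij
  have := expSum_pos (ℓ := ℓ) ⟨i, hi⟩ b
  refine div_pos (Finset.sum_pos' (fun _ _ => Finset.sum_nonneg fun _ _ => by positivity)
    ⟨i, hi, Finset.sum_pos' (fun _ _ => by positivity) ⟨j, hj, by positivity⟩⟩) (by positivity)

theorem continuous_tiltedMean (hs : s.Nonempty) : Continuous (tiltedMean s ℓ) :=
  continuous_iff_continuousAt.2 fun b => (hasDerivAt_tiltedMean hs b).continuousAt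

theorem logMeanExp_zero (hs : s.Nonempty) : logMeanExp s ℓ 0 = 0 := by
  have : (s.card : ℝ) ≠ 0 := by exact_mod_cast hs.card_pos.ne'
  simp [logMeanExp, expSum, this]

end LogMeanExp

section RateFun

variable {ι : Type*} {s : Finset ι} {ℓ : ι → ℝ}

theorem mul_sub_logMeanExp_le (hs : s.Nonempty) {b₀ t : ℝ} (hb₀ : tiltedMean s ℓ b₀ = t)
    (b : ℝ) : b * t - logMeanExp s ℓ b ≤ b₀ * t - logMeanExp s ℓ b₀ := by
  set f := fun b => logMeanExp s ℓ b - b * t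
  have hf (b : ℝ) : HasDerivAt f (tiltedMean s ℓ b - t) b :=
    (hasDerivAt_logMeanExp hs b).sub (hasDerivAt_mul_const t)
  have hconvex : ConvexOn ℝ univ f :=
    Monotone.convexOn_univ_of_deriv (fun b => (hf b).differentiableAt) fun x y hxy => by
      simpa [(hf x).deriv, (hf y).deriv] using monotone_tiltedMean hs hxy
  have hmin : IsMinOn f univ b₀ := hconvex.isMinOn_of_rightDeriv_eq_zero (by simp) <| by
    rw [(hf b₀).hasDerivWithinAt.derivWithin (uniqueDiffWithinAt_Ioi b₀), hb₀, sub_self]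
  have := isMinOn_iff.1 hmin b (mem_univ b)
  simp only [f] at this
  linarith

theorem bddAbove_of_tiltedMean_eq (hs : s.Nonempty) {b₀ t : ℝ}
    (hb₀ : tiltedMean s ℓ b₀ = t) : BddAbove (range fun b => b * t - logMeanExp s ℓ b) :=
  ⟨_, forall_mem_range.2 (mul_sub_logMeanExp_le hs hb₀)⟩

theorem rateFun_eq_of_tiltedMean_eq (hs : s.Nonempty) {b₀ t : ℝ}
    (hb₀ : tiltedMean s ℓ b₀ = t) : rateFun s ℓ t = b₀ * t - logMeanExp s ℓ b₀ :=
  le_antisymm (ciSup_le (mul_sub_logMeanExp_le hs hb₀))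
    (le_ciSup (bddAbove_of_tiltedMean_eq hs hb₀) b₀)

theorem logMeanExp_lt_mul_tiltedMean (hne : ∃ i ∈ s, ∃ j ∈ s, ℓ i ≠ ℓ j) {b : ℝ} (hb : 0 < b) :
    logMeanExp s ℓ b < b * tiltedMean s ℓ b := by
  have hs : s.Nonempty := hne.imp fun _ h => h.1
  obtain ⟨ξ, hξ, hslope⟩ := exists_hasDerivAt_eq_slope (logMeanExp s ℓ) (tiltedMean s ℓ) hb
    (fun x _ => (hasDerivAt_logMeanExp hs x).continuousAt.continuousWithinAt)
    (fun x _ => hasDerivAt_logMeanExp hs x)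
  rw [logMeanExp_zero hs, sub_zero, sub_zero, eq_div_iff hb.ne'] at hslope
  have := strictMono_tiltedMean hne hξ.2
  nlinarith

theorem rateFun_tiltedMean_pos (hne : ∃ i ∈ s, ∃ j ∈ s, ℓ i ≠ ℓ j) {b : ℝ} (hb : 0 < b) :
    0 < rateFun s ℓ (tiltedMean s ℓ b) := by
  rw [rateFun_eq_of_tiltedMean_eq (hne.imp fun _ h => h.1) rfl]
  linarith [logMeanExp_lt_mul_tiltedMean hne hb]

theorem mul_sub_log_card_le_logMeanExp {j : ι} (hj : j ∈ s) (b : ℝ) :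
    b * ℓ j - Real.log s.card ≤ logMeanExp s ℓ b := by
  have hcard : (0 : ℝ) < s.card := by exact_mod_cast Finset.card_pos.2 ⟨j, hj⟩
  calc b * ℓ j - Real.log s.card = Real.log (1 / (s.card : ℝ) * Real.exp (b * ℓ j)) := by
        rw [Real.log_mul (by positivity) (Real.exp_ne_zero _), Real.log_exp, one_div,
          Real.log_inv]
        ring
    _ ≤ logMeanExp s ℓ b :=
        Real.log_le_log (by positivity) <| mul_le_mul_of_nonneg_left
          (Finset.single_le_sum (f := fun j => Real.exp (b * ℓ j))
            (fun _ _ => (Real.exp_pos _).le) hj) (by positivity)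

theorem logMeanExp_le_mul (hs : s.Nonempty) {a b : ℝ} (hℓ : ∀ j ∈ s, ℓ j ≤ a) (hb : 0 ≤ b) :
    logMeanExp s ℓ b ≤ b * a := by
  have hcard : (0 : ℝ) < s.card := by exact_mod_cast hs.card_pos
  have hsum : expSum s ℓ b ≤ s.card * Real.exp (b * a) := by
    simpa [expSum] using Finset.sum_le_card_nsmul s _ _ fun j hj =>
      Real.exp_le_exp.2 (mul_le_mul_of_nonneg_left (hℓ j hj) hb)
  calc logMeanExp s ℓ b ≤ Real.log (Real.exp (b * a)) :=
        Real.log_le_log (mean_expSum_pos hs b) <| by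
          rw [one_div, inv_mul_le_iff₀ hcard]
          exact hsum
    _ = b * a := Real.log_exp _

theorem exists_lt_tiltedMean {j : ι} (hj : j ∈ s) {t : ℝ} (ht : t < ℓ j) :
    ∃ b, t < tiltedMean s ℓ b := by
  by_contra! hle
  have hs : s.Nonempty := ⟨j, hj⟩
  have hf (b : ℝ) : HasDerivAt (fun b => logMeanExp s ℓ b - b * t) (tiltedMean s ℓ b - t) b :=
    (hasDerivAt_logMeanExp hs b).sub (hasDerivAt_mul_const t)
  have hanti : Antitone fun b => logMeanExp s ℓ b - b * t :=
    antitone_of_deriv_nonpos (fun b => (hf b).differentiableAt) fun b => by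
      rw [(hf b).deriv]
      linarith [hle b]
  -- `logMeanExp` grows at least with slope `ℓ j` but at most with slope `t`.
  set b := (Real.log s.card + 1) / (ℓ j - t)
  have hb : b * (ℓ j - t) = Real.log s.card + 1 := div_mul_cancel₀ _ (sub_pos.2 ht).ne'
  have hb₀ : 0 ≤ b := div_nonneg (by linarith [Real.log_natCast_nonneg s.card]) (sub_pos.2 ht).le
  have h₁ := hanti hb₀
  have h₂ := mul_sub_log_card_le_logMeanExp (ℓ := ℓ) hj b
  simp only [logMeanExp_zero hs, zero_mul, sub_zero] at h₁
  rw [mul_sub] at hb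
  linarith

theorem exists_le_of_bddAbove (hs : s.Nonempty) {t : ℝ}
    (h : BddAbove (range fun b => b * t - logMeanExp s ℓ b)) : ∃ j ∈ s, t ≤ ℓ j := by
  by_contra! hlt
  obtain ⟨j₀, hj₀, hmax⟩ := s.exists_max_image ℓ hs
  obtain ⟨K, hK⟩ := h
  have hK₀ : 0 ≤ K := by simpa [logMeanExp_zero hs] using hK ⟨0, rfl⟩
  have hgap : 0 < t - ℓ j₀ := sub_pos.2 (hlt j₀ hj₀)
  set b := (K + 1) / (t - ℓ j₀)
  have hb : b * (t - ℓ j₀) = K + 1 := div_mul_cancel₀ _ hgap.ne'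
  have h₁ : b * t - logMeanExp s ℓ b ≤ K := hK ⟨b, rfl⟩
  have h₂ := logMeanExp_le_mul hs hmax (by positivity : 0 ≤ b)
  rw [mul_sub] at hb
  linarith

theorem logMeanExp_neg (b : ℝ) : logMeanExp s (-ℓ) b = logMeanExp s ℓ (-b) := by
  simp [logMeanExp, expSum]

theorem tiltedMean_neg (b : ℝ) : tiltedMean s (-ℓ) b = -tiltedMean s ℓ (-b) := by
  simp [tiltedMean, expSum, neg_div, Finset.sum_neg_distrib]

theorem exists_tiltedMean_lt {j : ι} (hj : j ∈ s) {t : ℝ} (ht : ℓ j < t) :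
    ∃ b, tiltedMean s ℓ b < t := by
  obtain ⟨b, hb⟩ := exists_lt_tiltedMean (ℓ := -ℓ) hj (neg_lt_neg ht)
  rw [tiltedMean_neg] at hb
  exact ⟨-b, by linarith⟩

theorem exists_ge_of_bddAbove (hs : s.Nonempty) {t : ℝ}
    (h : BddAbove (range fun b => b * t - logMeanExp s ℓ b)) : ∃ j ∈ s, ℓ j ≤ t := by
  obtain ⟨K, hK⟩ := h
  obtain ⟨j, hj, hle⟩ := exists_le_of_bddAbove (ℓ := -ℓ) (t := -t) hs
    ⟨K, forall_mem_range.2 fun b => by simpa [logMeanExp_neg] using hK ⟨-b, rfl⟩⟩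
  exact ⟨j, hj, by simpa using hle⟩

theorem exists_tiltedMean_eq_of_bddAbove (hs : s.Nonempty) {t₁ t t₂ : ℝ} (h₁ : t₁ < t)
    (h₂ : t < t₂) (hbdd₁ : BddAbove (range fun b => b * t₁ - logMeanExp s ℓ b))
    (hbdd₂ : BddAbove (range fun b => b * t₂ - logMeanExp s ℓ b)) :
    ∃ b, tiltedMean s ℓ b = t := by
  obtain ⟨i, hi, hit⟩ := exists_ge_of_bddAbove hs hbdd₁
  obtain ⟨j, hj, htj⟩ := exists_le_of_bddAbove hs hbdd₂
  obtain ⟨b₁, hb₁⟩ := exists_tiltedMean_lt hi (hit.trans_lt h₁)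
  obtain ⟨b₂, hb₂⟩ := exists_lt_tiltedMean hj (h₂.trans_le htj)
  exact intermediate_value_univ b₁ b₂ (continuous_tiltedMean hs) ⟨hb₁.le, hb₂.le⟩

theorem eq_of_rateFun_supporting_line (hne : ∃ i ∈ s, ∃ j ∈ s, ℓ i ≠ ℓ j) {b₀ μ : ℝ}
    (hb₀ : b₀ ∈ Ioo 0 1)
    (hμ : ∀ t ∈ Ioo (tiltedMean s ℓ 0) (tiltedMean s ℓ 1),
      rateFun s ℓ (tiltedMean s ℓ b₀) + μ * (t - tiltedMean s ℓ b₀) ≤ rateFun s ℓ t) :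
    μ = b₀ := by
  have hs : s.Nonempty := hne.imp fun _ h => h.1
  have hD := strictMono_tiltedMean hne
  -- The increment of `rateFun` from `tiltedMean b₀` to `tiltedMean b` is at least `μ` times the
  -- increment of `tiltedMean` by hypothesis, and at most `b` times it because the supremum at
  -- `tiltedMean b` is attained at `b`.
  have key : ∀ b ∈ Ioo (0 : ℝ) 1, (μ - b) * (tiltedMean s ℓ b - tiltedMean s ℓ b₀) ≤ 0 := by
    intro b hb
    have h₁ := hμ _ ⟨hD hb.1, hD hb.2⟩
    rw [rateFun_eq_of_tiltedMean_eq hs rfl, rateFun_eq_of_tiltedMean_eq hs rfl] at h₁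
    have h₂ := mul_sub_logMeanExp_le hs (rfl : tiltedMean s ℓ b₀ = _) b
    nlinarith
  rcases lt_trichotomy μ b₀ with h | h | h
  · have hm : max μ 0 < b₀ := max_lt h hb₀.1
    have hb : (max μ 0 + b₀) / 2 ∈ Ioo (0 : ℝ) 1 :=
      ⟨by linarith [le_max_right μ 0], by linarith [hb₀.2]⟩
    have := key _ hb
    have := hD (show (max μ 0 + b₀) / 2 < b₀ by linarith)
    nlinarith [le_max_left μ 0]
  · exact h
  · have hm : b₀ < min μ 1 := lt_min h hb₀.2
    have hb : (b₀ + min μ 1) / 2 ∈ Ioo (0 : ℝ) 1 :=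
      ⟨by linarith [hb₀.1], by linarith [min_le_right μ 1]⟩
    have := key _ hb
    have := hD (show b₀ < (b₀ + min μ 1) / 2 by linarith)
    nlinarith [min_le_left μ 1]

theorem logMeanExp_eq_of_rateFun_eq {κ : Type*} {s' : Finset κ} {ℓ' : κ → ℝ}
    (hne : ∃ i ∈ s, ∃ j ∈ s, ℓ i ≠ ℓ j) (hs' : s'.Nonempty) {c : ℝ}
    (h : ∀ t ∈ Ioo (tiltedMean s ℓ 0) (tiltedMean s ℓ 1), rateFun s ℓ t = rateFun s' ℓ' (t - c))
    {b₀ : ℝ} (hb₀ : b₀ ∈ Ioo 0 1) :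
    logMeanExp s ℓ b₀ = logMeanExp s' ℓ' b₀ + b₀ * c := by
  have hs : s.Nonempty := hne.imp fun _ h => h.1
  have hD := strictMono_tiltedMean hne
  have hbdd : ∀ t ∈ Ioo (tiltedMean s ℓ 0) (tiltedMean s ℓ 1),
      BddAbove (range fun b => b * (t - c) - logMeanExp s' ℓ' b) := by
    intro t ht
    by_contra hnot
    obtain ⟨b, hb, rfl⟩ :=
      intermediate_value_Ioo zero_le_one (continuous_tiltedMean hs).continuousOn ht
    -- an unbounded supremum is the junk value `0`, but the left-hand rate is positive
    have := h _ ht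
    rw [show rateFun s' ℓ' _ = 0 from Real.iSup_of_not_bddAbove hnot] at this
    exact (rateFun_tiltedMean_pos hne hb.1).ne' this
  set t₀ := tiltedMean s ℓ b₀
  have ht₀ : t₀ ∈ Ioo (tiltedMean s ℓ 0) (tiltedMean s ℓ 1) := ⟨hD hb₀.1, hD hb₀.2⟩
  obtain ⟨μ, hμ⟩ : ∃ μ, tiltedMean s' ℓ' μ = t₀ - c := by
    obtain ⟨h₀, h₁⟩ := ht₀
    exact exists_tiltedMean_eq_of_bddAbove hs' (by linarith) (by linarith)
      (hbdd ((tiltedMean s ℓ 0 + t₀) / 2) ⟨by linarith, by linarith⟩)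
      (hbdd ((t₀ + tiltedMean s ℓ 1) / 2) ⟨by linarith, by linarith⟩)
  have hrate' := rateFun_eq_of_tiltedMean_eq hs' hμ
  have hμb₀ : μ = b₀ := eq_of_rateFun_supporting_line hne hb₀ fun t ht => by
    rw [h t₀ ht₀, h t ht, hrate']
    calc μ * (t₀ - c) - logMeanExp s' ℓ' μ + μ * (t - t₀)
        = μ * (t - c) - logMeanExp s' ℓ' μ := by ring
      _ ≤ rateFun s' ℓ' (t - c) := le_ciSup (hbdd t ht) μ
  have := h t₀ ht₀
  rw [rateFun_eq_of_tiltedMean_eq hs rfl, hrate', hμb₀] at this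
  linarith

end RateFun

theorem div_eq_rpow_and_rpow_eq_iff {a a' r r' M M' γ : ℝ} (ha : 0 < a) (ha' : 0 < a')
    (hr : 0 < r) (hr' : 0 < r') (hM : 0 < M) (hM' : 0 < M') (hγ : γ ≠ 0) :
    (a / a' = (r' / r) ^ γ ∧ (r' / r) ^ γ = (M' / M) ^ γ) ↔
      (Real.log a = Real.log a' + γ * Real.log (M' / M) ∧ r / M = r' / M') := by
  have hR : (r' / r) ^ γ = (M' / M) ^ γ ↔ r / M = r' / M' := by
    rw [Real.rpow_left_inj (by positivity) (by positivity) hγ, div_eq_div_iff hr.ne' hM.ne',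
      div_eq_div_iff hM.ne' hM'.ne']
    constructor <;> intro h <;> linarith
  have hN : a / a' = (M' / M) ^ γ ↔ Real.log a = Real.log a' + γ * Real.log (M' / M) := by
    rw [← Real.log_injOn_pos.eq_iff (div_pos ha ha') (Real.rpow_pos_of_pos (by positivity) γ),
      Real.log_div ha.ne' ha'.ne', Real.log_rpow (by positivity)]
    constructor <;> intro h <;> linarith
  constructor
  · rintro ⟨h₁, h₂⟩
    exact ⟨hN.1 (h₁.trans h₂), hR.1 h₂⟩
  · rintro ⟨h₁, h₂⟩
    rw [hR.2 h₂]
    exact ⟨hN.2 h₁, rfl⟩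

namespace BMData

variable (C : BMData)

def logColCount (j : Fin C.m) : ℝ := Real.log (C.colCount j)

theorem colCount_pos {j : Fin C.m} (hj : j ∈ C.cols) : 0 < C.colCount j := by
  obtain ⟨p, hp, rfl⟩ := Finset.mem_image.1 hj
  exact Finset.card_pos.2 ⟨p, Finset.mem_filter.2 ⟨hp, rfl⟩⟩

theorem cols_nonempty : C.cols.Nonempty :=
  Finset.card_pos.1 (zero_lt_one.trans C.one_lt_cols)

theorem M_pos : (0 : ℝ) < C.M := by
  exact_mod_cast C.cols_nonempty.card_pos

theorem gamma_pos : 0 < C.gamma :=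
  div_pos (Real.log_pos (by exact_mod_cast (one_lt_two.trans_le C.two_le_m).trans C.m_lt_n))
    (Real.log_pos (by exact_mod_cast one_lt_two.trans_le C.two_le_m))

theorem rate_eq_rateFun : C.rate = rateFun C.cols C.logColCount := by
  funext t
  refine iSup_congr fun b => ?_
  congr 3
  refine Finset.sum_congr rfl fun j hj => ?_
  rw [Real.rpow_def_of_pos (by exact_mod_cast C.colCount_pos hj), mul_comm, logColCount]

theorem tLow_eq : C.tLow = tiltedMean C.cols C.logColCount 0 := by
  simp [tLow, tiltedMean, expSum, logColCount, M, div_eq_inv_mul]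

theorem sum_colCount : ∑ j ∈ C.cols, (C.colCount j : ℝ) = C.N := by
  rw [N, Finset.card_eq_sum_card_image Prod.fst C.A]
  push_cast
  rfl

theorem tUp_eq : C.tUp = tiltedMean C.cols C.logColCount 1 := by
  have hexp : ∀ j ∈ C.cols, Real.exp (1 * C.logColCount j) = C.colCount j := fun j hj => by
    rw [one_mul, logColCount, Real.exp_log (by exact_mod_cast C.colCount_pos hj)]
  rw [tiltedMean, expSum, Finset.sum_congr rfl hexp, sum_colCount, tUp, Finset.sum_div]
  refine Finset.sum_congr rfl fun j hj => ?_
  rw [hexp j hj, logColCount]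
  ring

theorem NonUniform.exists_logColCount_ne {C : BMData} (hnu : C.NonUniform) :
    ∃ i ∈ C.cols, ∃ j ∈ C.cols, C.logColCount i ≠ C.logColCount j := by
  obtain ⟨i, hi, j, hj, hij⟩ := hnu
  refine ⟨i, hi, j, hj, fun h => hij ?_⟩
  exact_mod_cast Real.log_injOn_pos (mem_Ioi.2 (Nat.cast_pos.2 (C.colCount_pos hi)))
    (mem_Ioi.2 (Nat.cast_pos.2 (C.colCount_pos hj))) h

end BMData

namespace BMData.HasParams

variable {C : BMData} {M0 : ℕ} {Nt R : Fin M0 → ℕ} (hp : C.HasParams M0 Nt R)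
include hp

theorem strictAnti : StrictAnti Nt := fun i j h => hp.1 i j h

theorem R_pos (i : Fin M0) : 0 < R i := hp.2.1 i

theorem exists_colCount_eq (i : Fin M0) : ∃ c ∈ C.cols, C.colCount c = Nt i := by
  obtain ⟨c, hc⟩ := Finset.card_pos.1 (hp.2.2.2 i ▸ hp.R_pos i)
  exact ⟨c, (Finset.mem_filter.1 hc).1, (Finset.mem_filter.1 hc).2⟩

theorem Nt_pos (i : Fin M0) : 0 < Nt i := by
  obtain ⟨c, hc, hci⟩ := hp.exists_colCount_eq i
  exact hci ▸ C.colCount_pos hc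

theorem strictAnti_log : StrictAnti fun i => Real.log (Nt i) := fun i j h =>
  Real.log_lt_log (by exact_mod_cast hp.Nt_pos j) (by exact_mod_cast hp.strictAnti h)

theorem image_colCount : C.cols.image C.colCount = Finset.univ.image Nt := by
  ext v
  simp only [Finset.mem_image, Finset.mem_univ, true_and]
  constructor
  · rintro ⟨c, hc, rfl⟩
    obtain ⟨i, hi⟩ := hp.2.2.1 c hc
    exact ⟨i, hi.symm⟩
  · rintro ⟨i, rfl⟩
    exact hp.exists_colCount_eq i

theorem sum_cols_eq (F : ℕ → ℝ) :
    ∑ c ∈ C.cols, F (C.colCount c) = ∑ i, (R i : ℝ) * F (Nt i) := by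
  rw [Finset.sum_comp, hp.image_colCount,
    Finset.sum_image fun i _ j _ h => hp.strictAnti.injective h]
  exact Finset.sum_congr rfl fun i _ => by rw [hp.2.2.2 i, nsmul_eq_mul]

theorem exp_logMeanExp (x : ℝ) :
    Real.exp (logMeanExp C.cols C.logColCount x) =
      ∑ i, (R i : ℝ) / C.M * Real.exp (x * Real.log (Nt i)) := by
  have h := hp.sum_cols_eq fun n => Real.exp (x * Real.log n)
  rw [logMeanExp, Real.exp_log (mean_expSum_pos C.cols_nonempty x), expSum]
  simp only [logColCount]
  rw [h, Finset.mul_sum, M]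
  exact Finset.sum_congr rfl fun i _ => by ring

theorem logMeanExp_eq_add_iff {C' : BMData} {M0' : ℕ} {Nt' R' : Fin M0' → ℕ}
    (hp' : C'.HasParams M0' Nt' R') (x c : ℝ) :
    logMeanExp C.cols C.logColCount x = logMeanExp C'.cols C'.logColCount x + x * c ↔
      ∑ i, (R i : ℝ) / C.M * Real.exp (x * Real.log (Nt i)) =
        ∑ j, (R' j : ℝ) / C'.M * Real.exp (x * (Real.log (Nt' j) + c)) := by
  have hshift (j : Fin M0') : (R' j : ℝ) / C'.M * Real.exp (x * Real.log (Nt' j)) *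
      Real.exp (x * c) = (R' j : ℝ) / C'.M * Real.exp (x * (Real.log (Nt' j) + c)) := by
    rw [mul_add, Real.exp_add, mul_assoc]
  rw [← Real.exp_eq_exp, Real.exp_add, hp.exp_logMeanExp, hp'.exp_logMeanExp, Finset.sum_mul]
  simp only [hshift]

end BMData.HasParams

theorem statement8_general (C C' : BMData) (hnu : C.NonUniform)
    (M0 M0' : ℕ) (Nt R : Fin M0 → ℕ) (Nt' R' : Fin M0' → ℕ)
    (hp : C.HasParams M0 Nt R) (hp' : C'.HasParams M0' Nt' R') :
    (∀ t ∈ Set.Ioo C.tLow C.tUp,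
        C.rate t = C'.rate (t - C.gamma * Real.log ((C'.M : ℝ) / (C.M : ℝ)))) ↔
    (∃ h : M0 = M0', ∀ i : Fin M0,
      (Nt i : ℝ) / (Nt' (Fin.cast h i) : ℝ)
          = ((R' (Fin.cast h i) : ℝ) / (R i : ℝ)) ^ C.gamma ∧
      ((R' (Fin.cast h i) : ℝ) / (R i : ℝ)) ^ C.gamma
          = ((C'.M : ℝ) / (C.M : ℝ)) ^ C.gamma) := by
  set c := C.gamma * Real.log ((C'.M : ℝ) / C.M)
  have hparams (h : M0 = M0') (i : Fin M0) := div_eq_rpow_and_rpow_eq_iff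
    (Nat.cast_pos.2 (hp.Nt_pos i)) (Nat.cast_pos.2 (hp'.Nt_pos (Fin.cast h i)))
    (Nat.cast_pos.2 (hp.R_pos i)) (Nat.cast_pos.2 (hp'.R_pos (Fin.cast h i))) C.M_pos C'.M_pos
    C.gamma_pos.ne'
  simp only [hparams]
  rw [C.tLow_eq, C.tUp_eq, C.rate_eq_rateFun, C'.rate_eq_rateFun]
  constructor
  · intro H
    refine exists_cast_eq_of_sum_mul_exp_eq hp.strictAnti_log (hp'.strictAnti_log.add_const c)
      (fun i => (div_pos (Nat.cast_pos.2 (hp.R_pos i)) C.M_pos).ne')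
      (fun j => (div_pos (Nat.cast_pos.2 (hp'.R_pos j)) C'.M_pos).ne') fun x hx => ?_
    exact (hp.logMeanExp_eq_add_iff hp' x c).1
      (logMeanExp_eq_of_rateFun_eq hnu.exists_logColCount_ne C'.cols_nonempty H hx)
  · rintro ⟨rfl, hmatch⟩ t -
    have hL (x : ℝ) := (hp.logMeanExp_eq_add_iff hp' x c).2 <|
      Finset.sum_congr rfl fun i _ => by simp [c, (hmatch i).1, (hmatch i).2]
    exact iSup_congr fun b => by rw [hL]; ring

/-- **Theorem (rate-function characterization; same grid).** For two Bedford–McMullen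
carpets with non-uniform vertical fibres on the same grid, with parameters `(M₀, Ñ, R)`
and `(M₀', Ñ', R')` and rate functions `I`, `I'`:
`I(t) = I'(t − γ·log(M'/M))` for all `t ∈ (t̲, t̄)` iff `M₀ = M₀'` and
`Ñ_î/Ñ'_î = (R'_î/R_î)^γ = (M'/M)^γ` for every `î`. -/
theorem statement8 (C C' : BMData) (hgm : C.m = C'.m) (hgn : C.n = C'.n)
    (hnu : C.NonUniform) (hnu' : C'.NonUniform)
    (M0 M0' : ℕ) (Nt R : Fin M0 → ℕ) (Nt' R' : Fin M0' → ℕ)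
    (hp : C.HasParams M0 Nt R) (hp' : C'.HasParams M0' Nt' R') :
    (∀ t ∈ Set.Ioo C.tLow C.tUp,
        C.rate t = C'.rate (t - C.gamma * Real.log ((C'.M : ℝ) / (C.M : ℝ)))) ↔
    (∃ h : M0 = M0', ∀ i : Fin M0,
      (Nt i : ℝ) / (Nt' (Fin.cast h i) : ℝ)
          = ((R' (Fin.cast h i) : ℝ) / (R i : ℝ)) ^ C.gamma ∧
      ((R' (Fin.cast h i) : ℝ) / (R i : ℝ)) ^ C.gamma
          = ((C'.M : ℝ) / (C.M : ℝ)) ^ C.gamma) :=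
  statement8_general C C' hnu M0 M0' Nt R Nt' R' hp hp'
end
end

section
/- Let Λ be a Bedford–McMullen carpet with non-uniform vertical fibres. Set Ψ_J(s) = ∑_{ī∈{1,…,M}^J} min_{0≤k≤J} ψ_{ī|k}(s), and let s̲ = t̲/log n + (log M)/(log m) and s̄ = t̄/log n + (log M)/(log m). Then for every s ∈ (s̲, s̄), the limit P(s) = lim_{J→∞} (1/J)·log Ψ_J(s) exists (the liminf and limsup coincide), and with t = (s − (log M)/(log m))·log n one has P(s) = log M − I(t) = H(Q*_t). -/
open Filter Set MeasureTheory
open scoped ENNReal NNReal Topology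

noncomputable section

set_option maxHeartbeats 1000000

open Finset Real Filter
set_option linter.unusedSectionVars false

namespace BMAux

variable {α : Type*} [Fintype α] [DecidableEq α]

/-- periodic extension of a word -/
def wext {J : ℕ} (hJ : 0 < J) (w : Fin J → α) (i : ℕ) : α := w ⟨i % J, Nat.mod_lt _ hJ⟩

variable (x : α → ℝ)

/-- prefix sums of the periodic extension -/
def T {J : ℕ} (hJ : 0 < J) (w : Fin J → α) (k : ℕ) : ℝ :=
  ∑ i ∈ Finset.range k, x (wext hJ w i)

/-- total sum along the word -/
def tot {J : ℕ} (w : Fin J → α) : ℝ := ∑ ℓ, x (w ℓ)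

/-- prefix sum (within the word) -/
def pref {J : ℕ} (w : Fin J → α) (k : ℕ) : ℝ :=
  ∑ ℓ ∈ Finset.univ.filter (fun ℓ : Fin J => (ℓ : ℕ) < k), x (w ℓ)

/-- min of prefix sums -/
noncomputable def mF {J : ℕ} (w : Fin J → α) : ℝ := ⨅ k : Fin (J + 1), pref x w (k : ℕ)

lemma wext_add_J {J : ℕ} (hJ : 0 < J) (w : Fin J → α) (i : ℕ) :
    wext hJ w (i + J) = wext hJ w i := by
  simp [wext, Nat.add_mod_right]

lemma period_sum {J : ℕ} (hJ : 0 < J) (w : Fin J → α) (k : ℕ) :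
    ∑ j ∈ Finset.range J, x (wext hJ w (k + j)) = tot x w := by
  induction k with
  | zero =>
    simp only [Nat.zero_add]
    rw [tot, ← Fin.sum_univ_eq_sum_range (fun i => x (wext hJ w i)) J]
    refine Finset.sum_congr rfl fun ℓ _ => ?_
    simp [wext, Nat.mod_eq_of_lt ℓ.isLt]
  | succ k ih =>
    have h1 : ∑ j ∈ Finset.range (J + 1), x (wext hJ w (k + j))
        = (∑ j ∈ Finset.range J, x (wext hJ w (k + (j + 1)))) + x (wext hJ w (k + 0)) := by
      rw [Finset.sum_range_succ']
    have h2 : ∑ j ∈ Finset.range (J + 1), x (wext hJ w (k + j))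
        = (∑ j ∈ Finset.range J, x (wext hJ w (k + j))) + x (wext hJ w (k + J)) := by
      rw [Finset.sum_range_succ]
    have h3 : x (wext hJ w (k + J)) = x (wext hJ w (k + 0)) := by
      rw [← Nat.add_zero k, wext_add_J]
    have h4 : ∑ j ∈ Finset.range J, x (wext hJ w (k + 1 + j))
        = ∑ j ∈ Finset.range J, x (wext hJ w (k + (j + 1))) := by
      refine Finset.sum_congr rfl fun j _ => by ring_nf
    rw [h4]
    have := h1.symm.trans h2
    have h5 : ∑ j ∈ Finset.range J, x (wext hJ w (k + (j + 1)))
        = ∑ j ∈ Finset.range J, x (wext hJ w (k + j)) := by linarith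
    rw [h5, ih]

lemma T_add {J : ℕ} (hJ : 0 < J) (w : Fin J → α) (k r : ℕ) :
    T x hJ w (r + k) = T x hJ w r + ∑ i ∈ Finset.range k, x (wext hJ w (r + i)) := by
  rw [T, Finset.sum_range_add]; rfl

lemma T_add_J {J : ℕ} (hJ : 0 < J) (w : Fin J → α) (k : ℕ) :
    T x hJ w (k + J) = T x hJ w k + tot x w := by
  rw [T_add x hJ w J k, period_sum]

lemma pref_eq_T {J : ℕ} (hJ : 0 < J) (w : Fin J → α) (k : ℕ) (hk : k ≤ J) :
    pref x w k = T x hJ w k := by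
  rw [pref, Finset.sum_filter]
  have h1 : (∑ a : Fin J, if (a : ℕ) < k then x (w a) else 0)
      = ∑ a : Fin J, (fun i : ℕ => if i < k then x (wext hJ w i) else 0) (a : ℕ) := by
    refine Finset.sum_congr rfl fun a _ => ?_
    simp [wext, Nat.mod_eq_of_lt a.isLt]
  rw [h1, Fin.sum_univ_eq_sum_range (fun i : ℕ => if i < k then x (wext hJ w i) else 0) J,
    ← Finset.sum_filter]
  rw [T]
  congr 1
  ext i
  simp only [Finset.mem_filter, Finset.mem_range]
  omega

end BMAux

namespace BMAux2
open BMAux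
variable {α : Type*} [Fintype α] [DecidableEq α] (x : α → ℝ)

/-- cyclic rotation of a word -/
def rot {J : ℕ} (hJ : 0 < J) (r : ℕ) (w : Fin J → α) : Fin J → α :=
  fun ℓ => wext hJ w ((ℓ : ℕ) + r)

lemma wext_rot {J : ℕ} (hJ : 0 < J) (r : ℕ) (w : Fin J → α) (i : ℕ) :
    wext hJ (rot hJ r w) i = wext hJ w (i + r) := by
  simp [wext, rot, Nat.mod_add_mod]

lemma rot_rot {J : ℕ} (hJ : 0 < J) (r r' : ℕ) (w : Fin J → α) :
    rot hJ r (rot hJ r' w) = rot hJ (r + r') w := by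
  funext ℓ
  show wext hJ (rot hJ r' w) ((ℓ : ℕ) + r) = wext hJ w ((ℓ : ℕ) + (r + r'))
  rw [wext_rot]
  congr 1
  omega

lemma rot_J {J : ℕ} (hJ : 0 < J) (w : Fin J → α) : rot hJ J w = w := by
  funext ℓ
  show wext hJ w ((ℓ : ℕ) + J) = w ℓ
  rw [wext_add_J]
  simp [wext, Nat.mod_eq_of_lt ℓ.isLt]

lemma tot_rot {J : ℕ} (hJ : 0 < J) (r : ℕ) (w : Fin J → α) :
    tot x (rot hJ r w) = tot x w := by
  have hinj : Function.Injective (fun ℓ : Fin J => (⟨((ℓ : ℕ) + r) % J, Nat.mod_lt _ hJ⟩ : Fin J)) := by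
    intro a b hab
    have h1 : ((a : ℕ) + r) % J = ((b : ℕ) + r) % J := by
      simpa using congrArg Fin.val hab
    have h2 : (a : ℕ) % J = (b : ℕ) % J := Nat.ModEq.add_right_cancel' r h1
    have := a.isLt; have := b.isLt
    apply Fin.ext
    rwa [Nat.mod_eq_of_lt a.isLt, Nat.mod_eq_of_lt b.isLt] at h2
  have hbij := (Finite.injective_iff_bijective).mp hinj
  exact Fintype.sum_bijective _ hbij (fun ℓ => x (rot hJ r w ℓ)) (fun ℓ => x (w ℓ))
    (fun ℓ => rfl)

lemma pref_rot {J : ℕ} (hJ : 0 < J) (r : ℕ) (w : Fin J → α) (k : ℕ) (hk : k ≤ J) :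
    pref x (rot hJ r w) k = T x hJ w (r + k) - T x hJ w r := by
  rw [pref_eq_T x hJ _ k hk, T_add x hJ w k r]
  have : ∀ i, wext hJ (rot hJ r w) i = wext hJ w (r + i) := by
    intro i; rw [wext_rot]; congr 1; omega
  simp only [T, this]
  ring

lemma exists_rot {J : ℕ} (hJ : 0 < J) (w : Fin J → α) :
    ∃ r ≤ J, ∀ k ≤ J, min 0 (tot x w) ≤ pref x (rot hJ r w) k := by
  obtain ⟨k0, hk0⟩ := Finite.exists_min (fun k : Fin (J + 1) => T x hJ w (k : ℕ))
  refine ⟨(k0 : ℕ), by omega, fun k hk => ?_⟩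
  rw [pref_rot x hJ _ w k hk]
  by_cases h : (k0 : ℕ) + k ≤ J
  · have h1 := hk0 ⟨(k0 : ℕ) + k, by omega⟩
    have h2 : min (0:ℝ) (tot x w) ≤ 0 := min_le_left _ _
    simp only at h1
    linarith
  · have hj : (k0 : ℕ) + k = ((k0 : ℕ) + k - J) + J := by omega
    have h1 : T x hJ w ((k0 : ℕ) + k) = T x hJ w ((k0 : ℕ) + k - J) + tot x w := by
      conv_lhs => rw [hj]
      rw [T_add_J]
    have h2 := hk0 ⟨(k0 : ℕ) + k - J, by omega⟩
    have h3 : min (0:ℝ) (tot x w) ≤ tot x w := min_le_right _ _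
    simp only at h2
    linarith

lemma min_le_mF_rot {J : ℕ} (hJ : 0 < J) (w : Fin J → α) :
    ∃ r ≤ J, min 0 (tot x w) ≤ mF x (rot hJ r w) := by
  obtain ⟨r, hr, hmin⟩ := exists_rot x hJ w
  exact ⟨r, hr, le_ciInf fun k => hmin (k : ℕ) (by omega)⟩

lemma rot_sum_bound {J : ℕ} (hJ : 0 < J) :
    ∑ w : Fin J → α, Real.exp (min 0 (tot x w))
      ≤ (J + 1 : ℝ) * ∑ w : Fin J → α, Real.exp (mF x w) := by
  classical
  choose r hr hmin using min_le_mF_rot x hJ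
  set σ : (Fin J → α) → (Fin J → α) := fun w => rot hJ (r w) w with hσ
  have step1 : ∑ w : Fin J → α, Real.exp (min 0 (tot x w))
      ≤ ∑ w : Fin J → α, Real.exp (mF x (σ w)) := by
    refine Finset.sum_le_sum fun w _ => Real.exp_le_exp.2 ?_
    exact hmin w
  have step2 : ∑ w : Fin J → α, Real.exp (mF x (σ w))
      ≤ (J + 1 : ℝ) * ∑ v : Fin J → α, Real.exp (mF x v) := by
    rw [Finset.sum_comp (fun v => Real.exp (mF x v)) σ]
    have hcard : ∀ v : Fin J → α,
        ((Finset.univ.filter (fun w => σ w = v)).card : ℝ) ≤ (J + 1 : ℝ) := by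
      intro v
      have hsub : Finset.univ.filter (fun w => σ w = v)
          ⊆ Finset.image (fun i : Fin (J + 1) => rot hJ (i : ℕ) v) Finset.univ := by
        intro w hw
        have hwv : σ w = v := (Finset.mem_filter.mp hw).2
        have hwr : w = rot hJ (J - r w) v := by
          rw [← hwv, hσ]
          show w = rot hJ (J - r w) (rot hJ (r w) w)
          rw [rot_rot]
          have : J - r w + r w = J := by have := hr w; omega
          rw [this, rot_J]
        exact Finset.mem_image.mpr ⟨⟨J - r w, by omega⟩, Finset.mem_univ _, hwr.symm⟩
      have h1 := Finset.card_le_card hsub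
      have h2 := Finset.card_image_le (s := (Finset.univ : Finset (Fin (J+1))))
        (f := fun i : Fin (J + 1) => rot hJ (i : ℕ) v)
      have h3 : (Finset.univ : Finset (Fin (J+1))).card = J + 1 := by simp
      have : (Finset.univ.filter (fun w => σ w = v)).card ≤ J + 1 := by omega
      exact_mod_cast this
    calc ∑ v ∈ Finset.image σ Finset.univ,
          (Finset.univ.filter (fun w => σ w = v)).card • Real.exp (mF x v)
        ≤ ∑ v ∈ Finset.image σ Finset.univ, (J + 1 : ℝ) * Real.exp (mF x v) := by
          refine Finset.sum_le_sum fun v _ => ?_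
          rw [nsmul_eq_mul]
          exact mul_le_mul_of_nonneg_right (hcard v) (Real.exp_pos _).le
      _ ≤ ∑ v : Fin J → α, (J + 1 : ℝ) * Real.exp (mF x v) := by
          refine Finset.sum_le_sum_of_subset_of_nonneg (Finset.subset_univ _) fun v _ _ => ?_
          positivity
      _ = (J + 1 : ℝ) * ∑ v : Fin J → α, Real.exp (mF x v) := by
          rw [Finset.mul_sum]
  linarith

end BMAux2


namespace BMAux3
open BMAux BMAux2
set_option linter.unusedSectionVars false

variable {α : Type*} [Fintype α] [DecidableEq α] [Nonempty α] (x : α → ℝ) (lam : ℝ)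

/-- tilted partition sum -/
noncomputable def W : ℝ := ∑ j, Real.exp (lam * x j)

/-- tilted second moment -/
noncomputable def V : ℝ := ∑ j, Real.exp (lam * x j) * (x j) ^ 2

lemma W_pos : 0 < W x lam :=
  Finset.sum_pos (fun j _ => Real.exp_pos _) Finset.univ_nonempty

lemma V_nonneg : 0 ≤ V x lam :=
  Finset.sum_nonneg fun j _ => mul_nonneg (Real.exp_pos _).le (sq_nonneg _)

lemma sum_prod_word (f : α → ℝ) (J : ℕ) :
    ∑ w : Fin J → α, ∏ ℓ, f (w ℓ) = (∑ j, f j) ^ J := by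
  rw [← Fintype.piFinset_univ, ← Finset.prod_univ_sum (fun _ : Fin J => (Finset.univ : Finset α))
    (fun _ j => f j), Finset.prod_const, Finset.card_univ, Fintype.card_fin]

lemma exp_tot_eq_prod {J : ℕ} (w : Fin J → α) :
    Real.exp (lam * tot x w) = ∏ ℓ, Real.exp (lam * x (w ℓ)) := by
  rw [← Real.exp_sum, tot, Finset.mul_sum]

lemma sum_exp_tot (J : ℕ) :
    ∑ w : Fin J → α, Real.exp (lam * tot x w) = (W x lam) ^ J := by
  rw [Finset.sum_congr rfl fun w _ => exp_tot_eq_prod x lam w]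
  exact sum_prod_word (fun j => Real.exp (lam * x j)) J

lemma second_moment (hcent : ∑ j, Real.exp (lam * x j) * x j = 0) (J : ℕ) :
    ∑ w : Fin J → α, Real.exp (lam * tot x w) * (tot x w) ^ 2
      = (J : ℝ) * V x lam * (W x lam) ^ (J - 1) := by
  classical
  have key : ∀ ℓ ℓ' : Fin J,
      (∑ w : Fin J → α, (∏ m, Real.exp (lam * x (w m))) * (x (w ℓ) * x (w ℓ')))
        = if ℓ = ℓ' then V x lam * (W x lam) ^ (J - 1) else 0 := by
    intro ℓ ℓ'
    set g : Fin J → α → ℝ := fun m j =>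
      Real.exp (lam * x j) * (if m = ℓ then x j else 1) * (if m = ℓ' then x j else 1) with hg
    have hA : ∀ w : Fin J → α,
        (∏ m, g m (w m)) = (∏ m, Real.exp (lam * x (w m))) * (x (w ℓ) * x (w ℓ')) := by
      intro w
      rw [hg]
      simp only []
      rw [Finset.prod_mul_distrib, Finset.prod_mul_distrib,
        Finset.prod_ite_eq' Finset.univ ℓ (fun m => x (w m)),
        Finset.prod_ite_eq' Finset.univ ℓ' (fun m => x (w m)),
        if_pos (Finset.mem_univ ℓ), if_pos (Finset.mem_univ ℓ')]
      ring
    have hB : (∑ w : Fin J → α, ∏ m, g m (w m)) = ∏ m, ∑ j : α, g m j := by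
      rw [← Fintype.piFinset_univ, ← Finset.prod_univ_sum (fun _ : Fin J => (Finset.univ : Finset α)) g]
    have hC : ∀ m : Fin J, (∑ j : α, g m j)
        = if m = ℓ then (if m = ℓ' then V x lam else 0)
          else (if m = ℓ' then 0 else W x lam) := by
      intro m
      by_cases h1 : m = ℓ
      · by_cases h2 : m = ℓ'
        · simp only [hg, if_pos h1, if_pos h2]
          calc ∑ j : α, Real.exp (lam * x j) * x j * x j
              = ∑ j : α, Real.exp (lam * x j) * (x j) ^ 2 :=
                Finset.sum_congr rfl fun j _ => by ring
            _ = V x lam := rfl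
        · simp only [hg, if_pos h1, if_neg h2, mul_one]
          exact hcent
      · by_cases h2 : m = ℓ'
        · simp only [hg, if_neg h1, if_pos h2, mul_one]
          exact hcent
        · simp only [hg, if_neg h1, if_neg h2, mul_one]
          rfl
    rw [← Finset.sum_congr rfl (fun w _ => hA w), hB]
    by_cases hll : ℓ = ℓ'
    · subst hll
      rw [if_pos rfl, ← Finset.mul_prod_erase Finset.univ _ (Finset.mem_univ ℓ)]
      have h1 : (∑ j : α, g ℓ j) = V x lam := by rw [hC ℓ, if_pos rfl, if_pos rfl]
      rw [h1]
      congr 1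
      have h2 : ∀ m ∈ Finset.univ.erase ℓ, (∑ j : α, g m j) = W x lam := by
        intro m hm
        have hm' : m ≠ ℓ := (Finset.mem_erase.mp hm).1
        rw [hC m, if_neg hm', if_neg hm']
      rw [Finset.prod_congr rfl h2, Finset.prod_const,
        Finset.card_erase_of_mem (Finset.mem_univ ℓ), Finset.card_univ, Fintype.card_fin]
    · rw [if_neg hll]
      refine Finset.prod_eq_zero (Finset.mem_univ ℓ) ?_
      rw [hC ℓ, if_pos rfl, if_neg (fun h => hll h)]
  calc ∑ w : Fin J → α, Real.exp (lam * tot x w) * (tot x w) ^ 2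
      = ∑ w : Fin J → α, ∑ ℓ, ∑ ℓ', (∏ m, Real.exp (lam * x (w m))) * (x (w ℓ) * x (w ℓ')) := by
        refine Finset.sum_congr rfl fun w _ => ?_
        rw [exp_tot_eq_prod, sq, tot, Finset.sum_mul_sum, Finset.mul_sum]
        refine Finset.sum_congr rfl fun ℓ _ => ?_
        rw [Finset.mul_sum]
    _ = ∑ ℓ : Fin J, ∑ ℓ' : Fin J, ∑ w : Fin J → α,
          (∏ m, Real.exp (lam * x (w m))) * (x (w ℓ) * x (w ℓ')) := by
        rw [Finset.sum_comm]
        exact Finset.sum_congr rfl fun ℓ _ => Finset.sum_comm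
    _ = ∑ ℓ : Fin J, ∑ ℓ' : Fin J, if ℓ = ℓ' then V x lam * (W x lam) ^ (J - 1) else 0 :=
        Finset.sum_congr rfl fun ℓ _ => Finset.sum_congr rfl fun ℓ' _ => key ℓ ℓ'
    _ = (J : ℝ) * V x lam * (W x lam) ^ (J - 1) := by
        have h : ∀ ℓ : Fin J, (∑ ℓ' : Fin J, if ℓ = ℓ' then V x lam * (W x lam) ^ (J - 1) else 0)
            = V x lam * (W x lam) ^ (J - 1) := by
          intro ℓ
          rw [Finset.sum_ite_eq Finset.univ ℓ (fun _ => V x lam * (W x lam) ^ (J - 1)),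
            if_pos (Finset.mem_univ ℓ)]
        rw [Finset.sum_congr rfl fun ℓ _ => h ℓ, Finset.sum_const, Finset.card_univ,
          Fintype.card_fin, nsmul_eq_mul]
        ring

end BMAux3

namespace BMAux4
open BMAux BMAux2 BMAux3 Filter
set_option linter.unusedSectionVars false

variable {α : Type*} [Fintype α] [DecidableEq α] [Nonempty α] (x : α → ℝ) (lam : ℝ)

lemma pref_zero {J : ℕ} (w : Fin J → α) : pref x w 0 = 0 := by
  rw [pref]
  convert Finset.sum_empty
  ext ℓ
  simp

lemma pref_full {J : ℕ} (w : Fin J → α) : pref x w J = tot x w := by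
  rw [pref, tot]
  refine Finset.sum_congr ?_ fun _ _ => rfl
  ext ℓ
  simp [ℓ.isLt]

lemma mF_le_pref {J : ℕ} (w : Fin J → α) (k : Fin (J + 1)) : mF x w ≤ pref x w (k : ℕ) :=
  ciInf_le (Set.Finite.bddBelow (Set.finite_range _)) k

lemma mF_le_zero {J : ℕ} (w : Fin J → α) : mF x w ≤ 0 := by
  have := mF_le_pref x w 0
  rwa [Fin.val_zero, pref_zero] at this

lemma mF_le_tot {J : ℕ} (w : Fin J → α) : mF x w ≤ tot x w := by
  have := mF_le_pref x w ⟨J, Nat.lt_succ_self J⟩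
  rwa [pref_full] at this

lemma sum_exp_mF_pos (J : ℕ) : 0 < ∑ w : Fin J → α, Real.exp (mF x w) :=
  Finset.sum_pos (fun w _ => Real.exp_pos _) Finset.univ_nonempty

lemma upper_bound (h0 : 0 ≤ lam) (h1 : lam ≤ 1) (J : ℕ) :
    ∑ w : Fin J → α, Real.exp (mF x w) ≤ (W x lam) ^ J := by
  rw [← sum_exp_tot x lam J]
  refine Finset.sum_le_sum fun w _ => Real.exp_le_exp.2 ?_
  have hz := mF_le_zero x w
  have ht := mF_le_tot x w
  rcases le_or_gt 0 (tot x w) with h | h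
  · calc mF x w ≤ 0 := hz
      _ ≤ lam * tot x w := mul_nonneg h0 h
  · calc mF x w ≤ tot x w := ht
      _ ≤ lam * tot x w := by nlinarith

lemma lower_eventually (h0 : 0 ≤ lam) (h1 : lam ≤ 1)
    (hcent : ∑ j, Real.exp (lam * x j) * x j = 0) {ε : ℝ} (hε : 0 < ε) :
    ∀ᶠ J : ℕ in atTop,
      Real.exp ((Real.log (W x lam) - 2 * ε) * J) ≤ ∑ w : Fin J → α, Real.exp (mF x w) := by
  classical
  set Wl := W x lam with hWl
  set Vl := V x lam with hVl
  have hWpos : 0 < Wl := W_pos x lam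
  have hVnn : 0 ≤ Vl := V_nonneg x lam
  obtain ⟨J0, hJ0⟩ := exists_nat_ge (max (2 * Vl / (Wl * ε ^ 2)) (16 / ε ^ 2))
  filter_upwards [eventually_ge_atTop (max J0 1)] with J hJ
  have hJ1 : 1 ≤ J := le_trans (le_max_right _ _) hJ
  have hJpos : 0 < J := hJ1
  have hJR : (J0 : ℝ) ≤ (J : ℝ) := by exact_mod_cast le_trans (le_max_left _ _) hJ
  have hJa : 2 * Vl / (Wl * ε ^ 2) ≤ (J : ℝ) := le_trans (le_trans (le_max_left _ _) hJ0) hJR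
  have hJb : 16 / ε ^ 2 ≤ (J : ℝ) := le_trans (le_trans (le_max_right _ _) hJ0) hJR
  have hJRpos : (0 : ℝ) < J := by exact_mod_cast hJpos
  set G : Finset (Fin J → α) := Finset.univ.filter (fun w => |tot x w| ≤ ε * J) with hG
  -- Chebyshev bound for the complement
  have cheb : ∑ w ∈ Finset.univ.filter (fun w : Fin J → α => ¬ |tot x w| ≤ ε * (J:ℝ)), Real.exp (lam * tot x w)
      ≤ (Vl / (Wl * ε ^ 2 * J)) * Wl ^ J := by
    have step1 : ∀ w ∈ Finset.univ.filter (fun w : Fin J → α => ¬ |tot x w| ≤ ε * (J:ℝ)),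
        Real.exp (lam * tot x w)
          ≤ Real.exp (lam * tot x w) * (tot x w) ^ 2 / (ε * J) ^ 2 := by
      intro w hw
      have habs : ε * (J:ℝ) < |tot x w| := lt_of_not_ge (Finset.mem_filter.mp hw).2
      have h2 : (ε * (J:ℝ)) ^ 2 < (tot x w) ^ 2 := by
        rw [← sq_abs (tot x w)]
        exact pow_lt_pow_left₀ habs (by positivity) (by norm_num)
      rw [le_div_iff₀ (by positivity)]
      nlinarith [Real.exp_pos (lam * tot x w)]
    calc ∑ w ∈ Finset.univ.filter (fun w : Fin J → α => ¬ |tot x w| ≤ ε * (J:ℝ)),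
          Real.exp (lam * tot x w)
        ≤ ∑ w ∈ Finset.univ.filter (fun w : Fin J → α => ¬ |tot x w| ≤ ε * (J:ℝ)),
            Real.exp (lam * tot x w) * (tot x w) ^ 2 / (ε * J) ^ 2 :=
          Finset.sum_le_sum step1
      _ ≤ ∑ w : Fin J → α, Real.exp (lam * tot x w) * (tot x w) ^ 2 / (ε * J) ^ 2 := by
          refine Finset.sum_le_sum_of_subset_of_nonneg (Finset.filter_subset _ _)
            fun w _ _ => by positivity
      _ = ((J : ℝ) * Vl * Wl ^ (J - 1)) / (ε * J) ^ 2 := by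
          rw [← Finset.sum_div, second_moment x lam hcent J]
      _ = (Vl / (Wl * ε ^ 2 * J)) * Wl ^ J := by
          have hJpow : Wl ^ J = Wl ^ (J - 1) * Wl := by
            rw [← pow_succ]
            congr 1
            omega
          rw [hJpow]
          field_simp
  -- the sum over good words is at least half of the full tilted sum
  have good : Wl ^ J / 2 ≤ ∑ w ∈ G, Real.exp (lam * tot x w) := by
    have hsplit := Finset.sum_filter_add_sum_filter_not Finset.univ
      (fun w : Fin J → α => |tot x w| ≤ ε * (J:ℝ)) (fun w => Real.exp (lam * tot x w))
    have hfull : ∑ w : Fin J → α, Real.exp (lam * tot x w) = Wl ^ J := sum_exp_tot x lam J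
    have hc : (Vl / (Wl * ε ^ 2 * J)) ≤ 1 / 2 := by
      rw [div_le_div_iff₀ (by positivity) (by norm_num)]
      have h1 : 2 * Vl ≤ Wl * ε ^ 2 * J := by
        rw [div_le_iff₀ (by positivity)] at hJa
        linarith
      linarith
    have hWp : (0:ℝ) < Wl ^ J := pow_pos hWpos J
    have : ∑ w ∈ Finset.univ.filter (fun w : Fin J → α => ¬ |tot x w| ≤ ε * (J:ℝ)),
        Real.exp (lam * tot x w) ≤ Wl ^ J / 2 := by
      calc _ ≤ (Vl / (Wl * ε ^ 2 * J)) * Wl ^ J := cheb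
        _ ≤ (1/2) * Wl ^ J := mul_le_mul_of_nonneg_right hc hWp.le
        _ = Wl ^ J / 2 := by ring
    rw [hG]
    linarith
  -- lower bound each good word's contribution to the min-sum
  have pointwise : ∀ w ∈ G, Real.exp (lam * tot x w) * Real.exp (-(ε * J))
      ≤ Real.exp (min 0 (tot x w)) := by
    intro w hw
    have habs : |tot x w| ≤ ε * (J:ℝ) := (Finset.mem_filter.mp hw).2
    rw [← Real.exp_add, Real.exp_le_exp]
    rcases le_or_gt 0 (tot x w) with h | h
    · rw [min_eq_left h]
      rw [abs_of_nonneg h] at habs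
      nlinarith
    · rw [min_eq_right h.le]
      rw [abs_of_neg h] at habs
      nlinarith
  -- rotation bound
  have rotb := rot_sum_bound x hJpos
  -- combine
  have combo : Real.exp (-(ε * J)) * (Wl ^ J / 2)
      ≤ ((J:ℝ) + 1) * ∑ w : Fin J → α, Real.exp (mF x w) := by
    calc Real.exp (-(ε * J)) * (Wl ^ J / 2)
        ≤ Real.exp (-(ε * J)) * ∑ w ∈ G, Real.exp (lam * tot x w) :=
          mul_le_mul_of_nonneg_left good (Real.exp_pos _).le
      _ = ∑ w ∈ G, Real.exp (lam * tot x w) * Real.exp (-(ε * J)) := by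
          rw [Finset.mul_sum]
          exact Finset.sum_congr rfl fun w _ => by ring
      _ ≤ ∑ w ∈ G, Real.exp (min 0 (tot x w)) := Finset.sum_le_sum pointwise
      _ ≤ ∑ w : Fin J → α, Real.exp (min 0 (tot x w)) :=
          Finset.sum_le_sum_of_subset_of_nonneg (Finset.filter_subset _ _)
            fun w _ _ => (Real.exp_pos _).le
      _ ≤ ((J:ℝ) + 1) * ∑ w : Fin J → α, Real.exp (mF x w) := by exact_mod_cast rotb
  -- 2(J+1) ≤ exp (ε J)
  have expJ : 2 * ((J:ℝ) + 1) ≤ Real.exp (ε * J) := by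
    have h1 : Real.exp (ε * J) = Real.exp (ε * J / 2) ^ 2 := by
      rw [sq, ← Real.exp_add]
      congr 1
      ring
    have h2 : 1 + ε * J / 2 ≤ Real.exp (ε * J / 2) := by
      have := Real.add_one_le_exp (ε * J / 2)
      linarith
    have h3 : (1 + ε * J / 2) ^ 2 ≤ Real.exp (ε * J / 2) ^ 2 := by
      have hnn : 0 ≤ 1 + ε * J / 2 := by positivity
      exact pow_le_pow_left₀ hnn h2 2
    have h4 : 16 ≤ ε ^ 2 * J := by
      rw [div_le_iff₀ (by positivity)] at hJb
      linarith
    have h5 : 2 * ((J:ℝ) + 1) ≤ (1 + ε * J / 2) ^ 2 := by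
      have hJ1R : (1:ℝ) ≤ J := by exact_mod_cast hJ1
      nlinarith [mul_pos hε hJRpos, sq_nonneg (ε * J)]
    linarith [h1 ▸ le_trans h5 h3]
  -- finish
  have hfinal : Real.exp ((Real.log Wl - 2 * ε) * J) ≤ ∑ w : Fin J → α, Real.exp (mF x w) := by
    have hWJ : Wl ^ J = Real.exp ((J:ℝ) * Real.log Wl) := by
      rw [← Real.exp_log hWpos, ← Real.exp_nat_mul, Real.exp_log hWpos]
    have e1 : Real.exp ((Real.log Wl - 2 * ε) * J)
        = Real.exp ((J:ℝ) * Real.log Wl) * Real.exp (-(ε * J)) * Real.exp (-(ε * J)) := by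
      rw [← Real.exp_add, ← Real.exp_add]
      congr 1
      ring
    have e2' : Real.exp (-(ε * J)) * (2 * ((J:ℝ) + 1)) ≤ 1 := by
      calc Real.exp (-(ε * J)) * (2 * ((J:ℝ) + 1))
          ≤ Real.exp (-(ε * J)) * Real.exp (ε * J) :=
            mul_le_mul_of_nonneg_left expJ (Real.exp_pos _).le
        _ = 1 := by rw [← Real.exp_add]; simp
    have hS := sum_exp_mF_pos x (J := J)
    rw [e1, ← hWJ]
    have step1 : Wl ^ J * Real.exp (-(ε * J)) * Real.exp (-(ε * J))
        = (Real.exp (-(ε * J)) * (Wl ^ J / 2)) * (2 * Real.exp (-(ε * J))) := by ring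
    have step2 : (Real.exp (-(ε * J)) * (Wl ^ J / 2)) * (2 * Real.exp (-(ε * J)))
        ≤ (((J:ℝ) + 1) * ∑ w : Fin J → α, Real.exp (mF x w)) * (2 * Real.exp (-(ε * J))) :=
      mul_le_mul_of_nonneg_right combo (by positivity)
    have step3 : (((J:ℝ) + 1) * ∑ w : Fin J → α, Real.exp (mF x w)) * (2 * Real.exp (-(ε * J)))
        = (∑ w : Fin J → α, Real.exp (mF x w)) * (Real.exp (-(ε * J)) * (2 * ((J:ℝ) + 1))) := by
      ring
    have step4 : (∑ w : Fin J → α, Real.exp (mF x w)) * (Real.exp (-(ε * J)) * (2 * ((J:ℝ) + 1)))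
        ≤ (∑ w : Fin J → α, Real.exp (mF x w)) * 1 :=
      mul_le_mul_of_nonneg_left e2' hS.le
    calc Wl ^ J * Real.exp (-(ε * J)) * Real.exp (-(ε * J))
        = (Real.exp (-(ε * J)) * (Wl ^ J / 2)) * (2 * Real.exp (-(ε * J))) := step1
      _ ≤ (((J:ℝ) + 1) * ∑ w : Fin J → α, Real.exp (mF x w)) * (2 * Real.exp (-(ε * J))) := step2
      _ = (∑ w : Fin J → α, Real.exp (mF x w)) * (Real.exp (-(ε * J)) * (2 * ((J:ℝ) + 1))) := step3
      _ ≤ (∑ w : Fin J → α, Real.exp (mF x w)) * 1 := step4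
      _ = ∑ w : Fin J → α, Real.exp (mF x w) := mul_one _
  exact hfinal

end BMAux4

namespace BMAux5
open BMAux BMAux2 BMAux3 BMAux4 Filter
set_option linter.unusedSectionVars false

variable {α : Type*} [Fintype α] [DecidableEq α] [Nonempty α]

theorem tendsto_logSum (x : α → ℝ) (lam : ℝ) (h0 : 0 ≤ lam) (h1 : lam ≤ 1)
    (hcent : ∑ j, Real.exp (lam * x j) * x j = 0) :
    Tendsto (fun J : ℕ => (1 / (J : ℝ)) * Real.log (∑ w : Fin J → α, Real.exp (mF x w)))
      atTop (nhds (Real.log (W x lam))) := by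
  rw [Metric.tendsto_atTop]
  intro δ hδ
  have hε : 0 < δ / 5 := by linarith
  obtain ⟨N, hN⟩ := (lower_eventually x lam h0 h1 hcent hε).exists_forall_of_atTop
  refine ⟨max N 1, fun J hJ => ?_⟩
  have hJ1 : 1 ≤ J := le_trans (le_max_right _ _) hJ
  have hJN : N ≤ J := le_trans (le_max_left _ _) hJ
  have hJpos : (0:ℝ) < J := by exact_mod_cast hJ1
  set L := Real.log (W x lam) with hL
  set Sg := ∑ w : Fin J → α, Real.exp (mF x w) with hSg
  have hSpos : 0 < Sg := sum_exp_mF_pos x J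
  -- upper bound
  have hup : Real.log Sg ≤ (J : ℝ) * L := by
    have h := upper_bound x lam h0 h1 J
    calc Real.log Sg ≤ Real.log ((W x lam) ^ J) :=
          Real.log_le_log hSpos h
      _ = (J : ℝ) * L := by rw [Real.log_pow]
  -- lower bound
  have hlow : (L - 2 * (δ / 5)) * J ≤ Real.log Sg := by
    have h := hN J hJN
    have := Real.log_le_log (Real.exp_pos _) h
    rwa [Real.log_exp] at this
  have hval : (1 / (J:ℝ)) * Real.log Sg ≤ L := by
    rw [div_mul_eq_mul_div, one_mul, div_le_iff₀ hJpos]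
    linarith
  have hval2 : L - 2 * (δ / 5) ≤ (1 / (J:ℝ)) * Real.log Sg := by
    rw [div_mul_eq_mul_div, one_mul, le_div_iff₀ hJpos]
    linarith [mul_le_of_le_one_left (le_of_lt hJpos) (le_refl (1:ℝ))]
  rw [Real.dist_eq, abs_sub_lt_iff]
  constructor <;> [linarith; linarith]

end BMAux5



namespace BMGlue
open Finset
set_option linter.unusedSectionVars false

variable (C : BMData)

lemma one_lt_M : 1 < C.M := C.one_lt_cols

lemma M_pos : 0 < C.M := lt_trans one_pos (one_lt_M C)

lemma colCount_pos {j : Fin C.m} (hj : j ∈ C.cols) : 0 < C.colCount j := by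
  rw [BMData.cols, Finset.mem_image] at hj
  obtain ⟨p, hp, hpj⟩ := hj
  exact Finset.card_pos.2 ⟨p, Finset.mem_filter.2 ⟨hp, hpj⟩⟩

lemma cols_nonempty : Nonempty {c // c ∈ C.cols} := by
  have : 0 < C.cols.card := lt_trans one_pos (one_lt_M C)
  obtain ⟨c, hc⟩ := Finset.card_pos.mp this
  exact ⟨⟨c, hc⟩⟩

lemma logn_pos : 0 < Real.log C.n := by
  refine Real.log_pos ?_
  have h1 : 2 ≤ C.m := C.two_le_m
  have h2 : C.m < C.n := C.m_lt_n
  exact_mod_cast by omega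

lemma N_pos : 0 < C.N := Finset.card_pos.2 C.A_nonempty

lemma sumN : ∑ j ∈ C.cols, (C.colCount j : ℝ) = (C.N : ℝ) := by
  have h := Finset.card_eq_sum_card_fiberwise
    (f := Prod.fst) (s := C.A) (t := C.cols)
    (fun p hp => Finset.mem_image.2 ⟨p, hp, rfl⟩)
  rw [BMData.N, h]
  push_cast
  rfl

/-- the log column counts, on the subtype of nonempty columns -/
noncomputable def aa : {c // c ∈ C.cols} → ℝ := fun j => Real.log (C.colCount j.1)

/-- partition function -/
noncomputable def Z (l : ℝ) : ℝ :=
  haveI := cols_nonempty C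
  ∑ j : {c // c ∈ C.cols}, Real.exp (l * aa C j)

/-- numerator of the derivative of `log Z` -/
noncomputable def num (l : ℝ) : ℝ := ∑ j : {c // c ∈ C.cols}, Real.exp (l * aa C j) * aa C j

lemma Z_pos (l : ℝ) : 0 < Z C l := by
  haveI := cols_nonempty C
  exact Finset.sum_pos (fun j _ => Real.exp_pos _) Finset.univ_nonempty

lemma exp_aa (j : {c // c ∈ C.cols}) : Real.exp (aa C j) = (C.colCount j.1 : ℝ) := by
  rw [aa, Real.exp_log]
  exact_mod_cast colCount_pos C j.2

lemma Z_zero : Z C 0 = (C.M : ℝ) := by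
  rw [Z]
  simp [BMData.M, Fintype.card_coe]

lemma num_zero : num C 0 = ∑ j ∈ C.cols, Real.log (C.colCount j) := by
  rw [num]
  simp only [zero_mul, Real.exp_zero, one_mul]
  exact Finset.sum_coe_sort C.cols (fun c => Real.log (C.colCount c))

lemma Z_one : Z C 1 = (C.N : ℝ) := by
  rw [Z, ← sumN C, ← Finset.sum_coe_sort C.cols (fun c => (C.colCount c : ℝ))]
  exact Finset.sum_congr rfl fun j _ => by rw [one_mul, exp_aa]

lemma num_one : num C 1 = ∑ j ∈ C.cols, (C.colCount j : ℝ) * Real.log (C.colCount j) := by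
  rw [num, ← Finset.sum_coe_sort C.cols (fun c => (C.colCount c : ℝ) * Real.log (C.colCount c))]
  exact Finset.sum_congr rfl fun j _ => by rw [one_mul, exp_aa, aa]

lemma exists_lam {t : ℝ} (h1 : C.tLow < t) (h2 : t < C.tUp) :
    ∃ lam : ℝ, 0 ≤ lam ∧ lam ≤ 1 ∧ num C lam = t * Z C lam := by
  haveI := cols_nonempty C
  set Φ : ℝ → ℝ := fun l => num C l / Z C l with hΦ
  have hcont : Continuous Φ := by
    apply Continuous.div
    · exact continuous_finset_sum _ fun j _ =>
        (Real.continuous_exp.comp (continuous_id.mul continuous_const)).mul continuous_const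
    · exact continuous_finset_sum _ fun j _ =>
        Real.continuous_exp.comp (continuous_id.mul continuous_const)
    · exact fun l => (Z_pos C l).ne'
  have hΦ0 : Φ 0 = C.tLow := by
    rw [hΦ]
    simp only [Z_zero, num_zero]
    rw [BMData.tLow, one_div, inv_mul_eq_div]
  have hΦ1 : Φ 1 = C.tUp := by
    rw [hΦ]
    simp only [Z_one, num_one]
    rw [BMData.tUp, Finset.sum_div]
    exact Finset.sum_congr rfl fun j _ => by ring
  have hsub := intermediate_value_Icc (by norm_num : (0:ℝ) ≤ 1) hcont.continuousOn
  have htmem : t ∈ Set.Icc (Φ 0) (Φ 1) := by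
    rw [hΦ0, hΦ1]
    exact ⟨h1.le, h2.le⟩
  obtain ⟨lam, hlam, hΦlam⟩ := hsub htmem
  refine ⟨lam, hlam.1, hlam.2, ?_⟩
  have := hΦlam
  rw [hΦ] at this
  field_simp [(Z_pos C lam).ne'] at this
  linarith [this]

lemma Z_ge {lam t : ℝ} (hnum : num C lam = t * Z C lam) (l : ℝ) :
    Real.exp ((l - lam) * t) * Z C lam ≤ Z C l := by
  haveI := cols_nonempty C
  have hpt : ∀ j : {c // c ∈ C.cols},
      Real.exp ((l - lam) * t) * (Real.exp (lam * aa C j) * (1 + (l - lam) * (aa C j - t)))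
        ≤ Real.exp (l * aa C j) := by
    intro j
    have h := Real.add_one_le_exp ((l - lam) * (aa C j - t))
    have hpos := (Real.exp_pos ((l - lam) * t + lam * aa C j)).le
    calc Real.exp ((l - lam) * t) * (Real.exp (lam * aa C j) * (1 + (l - lam) * (aa C j - t)))
        = Real.exp ((l - lam) * t + lam * aa C j) * ((l - lam) * (aa C j - t) + 1) := by
          rw [Real.exp_add]; ring
      _ ≤ Real.exp ((l - lam) * t + lam * aa C j) * Real.exp ((l - lam) * (aa C j - t)) :=
          mul_le_mul_of_nonneg_left h hpos
      _ = Real.exp (l * aa C j) := by rw [← Real.exp_add]; congr 1; ring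
  have hsum : ∑ j : {c // c ∈ C.cols},
      Real.exp ((l - lam) * t) * (Real.exp (lam * aa C j) * (1 + (l - lam) * (aa C j - t)))
      = Real.exp ((l - lam) * t) * (Z C lam + (l - lam) * (num C lam) - (l - lam) * t * Z C lam) := by
    rw [← Finset.mul_sum]
    congr 1
    rw [Z, num, Finset.mul_sum, Finset.mul_sum, ← Finset.sum_add_distrib, ← Finset.sum_sub_distrib]
    exact Finset.sum_congr rfl fun j _ => by ring
  have h2 : Real.exp ((l - lam) * t) * (Z C lam + (l - lam) * (num C lam) - (l - lam) * t * Z C lam)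
      = Real.exp ((l - lam) * t) * Z C lam := by
    rw [hnum]; ring
  calc Real.exp ((l - lam) * t) * Z C lam
      = ∑ j : {c // c ∈ C.cols},
          Real.exp ((l - lam) * t) * (Real.exp (lam * aa C j) * (1 + (l - lam) * (aa C j - t))) := by
        rw [hsum, h2]
    _ ≤ ∑ j : {c // c ∈ C.cols}, Real.exp (l * aa C j) := Finset.sum_le_sum fun j _ => hpt j
    _ = Z C l := rfl

lemma sum_rpow_eq_Z (l : ℝ) : ∑ j ∈ C.cols, (C.colCount j : ℝ) ^ l = Z C l := by
  haveI := cols_nonempty C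
  rw [Z, ← Finset.sum_coe_sort C.cols (fun c => (C.colCount c : ℝ) ^ l)]
  refine Finset.sum_congr rfl fun j _ => ?_
  have hpos : (0:ℝ) < (C.colCount j.1 : ℝ) := by exact_mod_cast colCount_pos C j.2
  rw [Real.rpow_def_of_pos hpos, aa]
  ring_nf

lemma log_term_eq (l : ℝ) :
    Real.log ((1 / (C.M : ℝ)) * ∑ j ∈ C.cols, (C.colCount j : ℝ) ^ l)
      = Real.log (Z C l) - Real.log C.M := by
  rw [sum_rpow_eq_Z, one_div, inv_mul_eq_div, Real.log_div (Z_pos C l).ne'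
    (by exact_mod_cast (M_pos C).ne')]

lemma rate_eq {lam t : ℝ} (hnum : num C lam = t * Z C lam) :
    C.rate t = lam * t - (Real.log (Z C lam) - Real.log C.M) := by
  have hgibbs : ∀ l : ℝ, l * t - (Real.log (Z C l) - Real.log C.M)
      ≤ lam * t - (Real.log (Z C lam) - Real.log C.M) := by
    intro l
    have h1 := Z_ge C hnum l
    have h2 : Real.log (Real.exp ((l - lam) * t) * Z C lam) ≤ Real.log (Z C l) :=
      Real.log_le_log (mul_pos (Real.exp_pos _) (Z_pos C lam)) h1
    rw [Real.log_mul (Real.exp_ne_zero _) (Z_pos C lam).ne', Real.log_exp] at h2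
    linarith
  rw [BMData.rate]
  have hre : ∀ l : ℝ, l * t - Real.log ((1 / (C.M : ℝ)) * ∑ j ∈ C.cols, (C.colCount j : ℝ) ^ l)
      = l * t - (Real.log (Z C l) - Real.log C.M) := fun l => by rw [log_term_eq]
  rw [iSup_congr hre]
  refine le_antisymm (ciSup_le fun l => hgibbs l) ?_
  exact le_ciSup ⟨lam * t - (Real.log (Z C lam) - Real.log C.M), by
    rintro y ⟨l, rfl⟩; exact hgibbs l⟩ lam

lemma entMax_eq {lam t : ℝ} (hnum : num C lam = t * Z C lam) :
    C.entMax t = Real.log (Z C lam) - lam * t := by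
  classical
  haveI := cols_nonempty C
  set Zl := Z C lam with hZl
  have hZpos : 0 < Zl := Z_pos C lam
  set q : Fin C.m → ℝ := fun c =>
    if h : c ∈ C.cols then Real.exp (lam * Real.log (C.colCount c)) / Zl else 0 with hq
  have hqc : ∀ c ∈ C.cols, q c = Real.exp (lam * Real.log (C.colCount c)) / Zl :=
    fun c hc => by rw [hq]; exact dif_pos hc
  have hZsum : ∑ c ∈ C.cols, Real.exp (lam * Real.log (C.colCount c)) = Zl := by
    rw [hZl, Z, ← Finset.sum_coe_sort C.cols (fun c => Real.exp (lam * Real.log (C.colCount c)))]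
    rfl
  have hnumsum : ∑ c ∈ C.cols, Real.exp (lam * Real.log (C.colCount c)) * Real.log (C.colCount c)
      = num C lam := by
    rw [num, ← Finset.sum_coe_sort C.cols
      (fun c => Real.exp (lam * Real.log (C.colCount c)) * Real.log (C.colCount c))]
    rfl
  have hqsum : (∑ c ∈ C.cols, q c) = 1 := by
    rw [Finset.sum_congr rfl hqc, ← Finset.sum_div, hZsum, div_self hZpos.ne']
  have hqmean : (∑ c ∈ C.cols, q c * Real.log (C.colCount c)) = t := by
    rw [Finset.sum_congr rfl fun c hc => by rw [hqc c hc]]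
    have : ∀ c ∈ C.cols, Real.exp (lam * Real.log (C.colCount c)) / Zl * Real.log (C.colCount c)
        = Real.exp (lam * Real.log (C.colCount c)) * Real.log (C.colCount c) / Zl :=
      fun c hc => by ring
    rw [Finset.sum_congr rfl this, ← Finset.sum_div, hnumsum, hnum]
    exact mul_div_cancel_right₀ t hZpos.ne'
  have hlogq : ∀ c ∈ C.cols, Real.log (q c) = lam * Real.log (C.colCount c) - Real.log Zl := by
    intro c hc
    rw [hqc c hc, Real.log_div (Real.exp_ne_zero _) hZpos.ne', Real.log_exp]
  have hqent : -∑ c ∈ C.cols, q c * Real.log (q c) = Real.log Zl - lam * t := by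
    have h1 : ∀ c ∈ C.cols, q c * Real.log (q c)
        = lam * (q c * Real.log (C.colCount c)) - Real.log Zl * q c := by
      intro c hc
      rw [hlogq c hc]; ring
    rw [Finset.sum_congr rfl h1, Finset.sum_sub_distrib, ← Finset.mul_sum, ← Finset.mul_sum,
      hqmean, hqsum, mul_one]
    ring
  have hmem : (Real.log Zl - lam * t) ∈ { h : ℝ | ∃ q : Fin C.m → ℝ, (∀ j, 0 ≤ q j) ∧
      (∀ j ∉ C.cols, q j = 0) ∧ (∑ j ∈ C.cols, q j) = 1 ∧
      (∑ j ∈ C.cols, q j * Real.log (C.colCount j)) = t ∧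
      h = -∑ j ∈ C.cols, q j * Real.log (q j) } := by
    refine ⟨q, fun j => ?_, fun j hj => by simp only [hq]; rw [dif_neg hj], hqsum, hqmean,
      hqent.symm⟩
    by_cases h : j ∈ C.cols
    · rw [hqc j h]; positivity
    · have hz : q j = 0 := by simp only [hq]; rw [dif_neg h]
      rw [hz]
  have hub : ∀ h' ∈ { h : ℝ | ∃ q : Fin C.m → ℝ, (∀ j, 0 ≤ q j) ∧
      (∀ j ∉ C.cols, q j = 0) ∧ (∑ j ∈ C.cols, q j) = 1 ∧
      (∑ j ∈ C.cols, q j * Real.log (C.colCount j)) = t ∧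
      h = -∑ j ∈ C.cols, q j * Real.log (q j) }, h' ≤ Real.log Zl - lam * t := by
    rintro h' ⟨p, hp0, hpout, hpsum, hpmean, hpent⟩
    have hpt : ∀ c ∈ C.cols, p c - q c ≤ p c * Real.log (p c) - p c * Real.log (q c) := by
      intro c hc
      have hqpos : 0 < q c := by
        rw [hqc c hc]; positivity
      rcases eq_or_lt_of_le (hp0 c) with h | h
      · rw [← h]; simp; exact hqpos.le
      · have hlog := Real.log_le_sub_one_of_pos (show 0 < q c / p c by positivity)
        rw [Real.log_div hqpos.ne' h.ne'] at hlog
        have hcancel : p c * (q c / p c) = q c := by field_simp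
        nlinarith
    have hsum2 : ∑ c ∈ C.cols, (p c - q c) = 0 := by
      rw [Finset.sum_sub_distrib, hpsum, hqsum, sub_self]
    have hsum3 : ∑ c ∈ C.cols, p c * Real.log (q c) = lam * t - Real.log Zl := by
      have h1 : ∀ c ∈ C.cols, p c * Real.log (q c)
          = lam * (p c * Real.log (C.colCount c)) - Real.log Zl * p c := by
        intro c hc; rw [hlogq c hc]; ring
      rw [Finset.sum_congr rfl h1, Finset.sum_sub_distrib, ← Finset.mul_sum, ← Finset.mul_sum,
        hpmean, hpsum, mul_one]
    have hmain : 0 ≤ (∑ c ∈ C.cols, p c * Real.log (p c)) - (lam * t - Real.log Zl) := by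
      rw [← hsum3]
      have := Finset.sum_le_sum hpt
      rw [hsum2, Finset.sum_sub_distrib] at this
      linarith
    rw [hpent]
    linarith
  rw [BMData.entMax]
  exact le_antisymm (csSup_le ⟨_, hmem⟩ hub) (le_csSup ⟨_, hub⟩ hmem)

lemma n_pos : 0 < C.n := lt_trans (lt_of_lt_of_le two_pos C.two_le_m) C.m_lt_n

lemma Psi_eq (s t : ℝ) (hts : t = (s - Real.log C.M / Real.log C.m) * Real.log C.n)
    {J : ℕ} (hJ : 0 < J) :
    C.Psi J s = ∑ w : Fin J → {c // c ∈ C.cols},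
      Real.exp (BMAux.mF (fun j => aa C j - t) w) := by
  classical
  haveI := cols_nonempty C
  set x : {c // c ∈ C.cols} → ℝ := fun j => aa C j - t with hx
  have hMpos : (0:ℝ) < (C.M : ℝ) := by exact_mod_cast M_pos C
  have hnpos : (0:ℝ) < (C.n : ℝ) := by exact_mod_cast n_pos C
  rw [BMData.Psi]
  refine Finset.sum_congr rfl fun w _ => ?_
  have hcard : ∀ k : ℕ, k ≤ J →
      (((Finset.univ.filter fun ℓ : Fin J => (ℓ : ℕ) < k).card : ℕ) : ℝ) = (k : ℝ) := by
    intro k hk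
    have h := BMAux.pref_eq_T (fun _ : {c // c ∈ C.cols} => (1:ℝ)) hJ w k hk
    rw [BMAux.pref, BMAux.T] at h
    simpa using h
  have hpsi : ∀ k : ℕ, k ≤ J → C.psi s w k = Real.exp (BMAux.pref x w k) := by
    intro k hk
    rw [BMData.psi, Real.rpow_def_of_pos hMpos, Real.rpow_def_of_pos hnpos]
    have hprod : ∏ l ∈ Finset.univ.filter (fun l : Fin J => (l : ℕ) < k),
        (C.colCount (w l).1 : ℝ)
        = Real.exp (∑ l ∈ Finset.univ.filter (fun l : Fin J => (l : ℕ) < k), aa C (w l)) := by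
      rw [Real.exp_sum]
      exact Finset.prod_congr rfl fun l _ => (exp_aa C (w l)).symm
    rw [hprod, ← Real.exp_add, ← Real.exp_add]
    congr 1
    have hpref : BMAux.pref x w k
        = (∑ l ∈ Finset.univ.filter (fun l : Fin J => (l : ℕ) < k), aa C (w l)) - k * t := by
      rw [BMAux.pref]
      have : ∀ l : Fin J, x (w l) = aa C (w l) - t := fun l => rfl
      rw [Finset.sum_congr rfl fun l _ => this l, Finset.sum_sub_distrib, Finset.sum_const,
        nsmul_eq_mul, hcard k hk]
    rw [hpref, hts, BMData.gamma]
    ring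
  obtain ⟨k0, hk0⟩ := Finite.exists_min (fun k : Fin (J + 1) => BMAux.pref x w (k : ℕ))
  have hb1 : BddBelow (Set.range fun k : Fin (J + 1) => BMAux.pref x w (k : ℕ)) :=
    (Set.finite_range _).bddBelow
  have hb2 : BddBelow (Set.range fun k : Fin (J + 1) => C.psi s w (k : ℕ)) :=
    (Set.finite_range _).bddBelow
  have hk0le : (k0 : ℕ) ≤ J := by have := k0.isLt; omega
  have h1 : BMAux.mF x w = BMAux.pref x w (k0 : ℕ) :=
    le_antisymm (ciInf_le hb1 k0) (le_ciInf hk0)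
  have h2 : (⨅ k : Fin (J + 1), C.psi s w (k : ℕ)) = C.psi s w (k0 : ℕ) := by
    refine le_antisymm (ciInf_le hb2 k0) (le_ciInf fun k => ?_)
    rw [hpsi _ hk0le, hpsi _ (by have := k.isLt; omega : (k : ℕ) ≤ J)]
    exact Real.exp_le_exp.2 (hk0 k)
  rw [h2, hpsi _ hk0le, h1]

end BMGlue

/-- **Proposition (the pressure-type function).** For `s ∈ (s̲, s̄)` and
`t = (s − log M/log m)·log n`, the limit `P(s) = lim_J (1/J) log Ψ_J(s)` exists and equals
`log M − I(t) = H(Q*_t)`. -/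
theorem statement10 (C : BMData) (hnu : C.NonUniform) (s t : ℝ)
    (hs1 : C.tLow / Real.log C.n + Real.log C.M / Real.log C.m < s)
    (hs2 : s < C.tUp / Real.log C.n + Real.log C.M / Real.log C.m)
    (ht : t = (s - Real.log C.M / Real.log C.m) * Real.log C.n) :
    Filter.Tendsto (fun J : ℕ => (1 / (J : ℝ)) * Real.log (C.Psi J s)) Filter.atTop
      (nhds (Real.log C.M - C.rate t)) ∧
    Real.log C.M - C.rate t = C.entMax t := by
  classical
  haveI := BMGlue.cols_nonempty C
  have hlogn : 0 < Real.log C.n := BMGlue.logn_pos C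
  have ht1 : C.tLow < t := by
    have h2 : C.tLow / Real.log C.n < s - Real.log C.M / Real.log C.m := by linarith
    have h3 := (div_lt_iff₀ hlogn).mp h2
    rw [ht]; linarith
  have ht2 : t < C.tUp := by
    have h2 : s - Real.log C.M / Real.log C.m < C.tUp / Real.log C.n := by linarith
    have h3 := (lt_div_iff₀ hlogn).mp h2
    rw [ht]; linarith
  obtain ⟨lam, h0, h1, hnum⟩ := BMGlue.exists_lam C ht1 ht2
  set x : {c // c ∈ C.cols} → ℝ := fun j => BMGlue.aa C j - t with hx
  have hcent : ∑ j : {c // c ∈ C.cols}, Real.exp (lam * x j) * x j = 0 := by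
    have hpt : ∀ j : {c // c ∈ C.cols}, Real.exp (lam * x j) * x j
        = Real.exp (-(lam * t)) * (Real.exp (lam * BMGlue.aa C j) * BMGlue.aa C j)
          - Real.exp (-(lam * t)) * (t * Real.exp (lam * BMGlue.aa C j)) := by
      intro j
      have hxj : x j = BMGlue.aa C j - t := rfl
      rw [hxj]
      rw [show lam * (BMGlue.aa C j - t) = -(lam * t) + lam * BMGlue.aa C j by ring,
        Real.exp_add]
      ring
    rw [Finset.sum_congr rfl fun j _ => hpt j, Finset.sum_sub_distrib,
      ← Finset.mul_sum, ← Finset.mul_sum]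
    have e1 : ∑ j : {c // c ∈ C.cols}, Real.exp (lam * BMGlue.aa C j) * BMGlue.aa C j
        = BMGlue.num C lam := rfl
    have e2 : ∑ j : {c // c ∈ C.cols}, t * Real.exp (lam * BMGlue.aa C j)
        = t * BMGlue.Z C lam := by
      rw [← Finset.mul_sum]; rfl
    rw [e1, e2, hnum]
    ring
  have hWlog : Real.log (BMAux3.W x lam) = Real.log (BMGlue.Z C lam) - lam * t := by
    have hW : BMAux3.W x lam = BMGlue.Z C lam * Real.exp (-(lam * t)) := by
      rw [BMAux3.W, BMGlue.Z, Finset.sum_mul]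
      refine Finset.sum_congr rfl fun j _ => ?_
      rw [← Real.exp_add]
      congr 1
      show lam * (BMGlue.aa C j - t) = lam * BMGlue.aa C j + -(lam * t)
      ring
    rw [hW, Real.log_mul (BMGlue.Z_pos C lam).ne' (Real.exp_ne_zero _), Real.log_exp]
    ring
  have hrate := BMGlue.rate_eq C hnum
  have hPval : Real.log C.M - C.rate t = Real.log (BMAux3.W x lam) := by
    rw [hrate, hWlog]; ring
  constructor
  · have htd := BMAux5.tendsto_logSum x lam h0 h1 hcent
    rw [hPval]
    refine Filter.Tendsto.congr' ?_ htd
    filter_upwards [Filter.eventually_ge_atTop 1] with J hJ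
    rw [BMGlue.Psi_eq C s t ht (by omega : 0 < J)]
  · rw [hPval, hWlog, BMGlue.entMax_eq C hnum]
end
end
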